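/- arXiv:1207.6549 — 9 statements merged into one kernel-verified Lean document; each statement's English description precedes it below -/
import Mathlib

section
/- The Poisson generating function f̃(z) = e^{-z} ∑_{n≥0} μ_n z^n/n! of the sequence μ_n defined by μ_0 = 0, μ_1 = 1, and μ_n = μ_{n-1} + ∑_{0≤k<n} C(n-1,k) p^{n-1-k} q^k μ_k for n ≥ 2, satisfies the functional-differential equation f̃'(z) = f̃(qz) + e^{-z} with f̃(0) = 0. -/
open Finset


lemma mu_nonneg (p q : ℝ) (hp : 0 < p) (hq0 : 0 < q)
    (μ : ℕ → ℝ) (hμ0 : μ 0 = 0) (hμ1 : μ 1 = 1)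
    (hrec : ∀ n ≥ 2, μ n = μ (n - 1) +
      ∑ k ∈ Finset.range n, ((n - 1).choose k : ℝ) * p ^ (n - 1 - k) * q ^ k * μ k) :
    ∀ n, 0 ≤ μ n := by
  intro n
  induction n using Nat.strong_induction_on with
  | _ n ih =>
    match n with
    | 0 => simp [hμ0]
    | 1 => simp [hμ1]
    | (m+2) =>
      rw [hrec (m+2) (by omega)]
      have h1 : 0 ≤ μ (m+2-1) := ih (m+1) (by omega)
      have h2 : 0 ≤ ∑ k ∈ Finset.range (m+2),
          ((m+2-1).choose k : ℝ) * p ^ (m+2-1-k) * q ^ k * μ k := by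
        apply Finset.sum_nonneg
        intro k hk
        have hk' : 0 ≤ μ k := ih k (Finset.mem_range.mp hk)
        positivity
      linarith

lemma mu_mono (p q : ℝ) (hp : 0 < p) (hq0 : 0 < q)
    (μ : ℕ → ℝ) (hμ0 : μ 0 = 0) (hμ1 : μ 1 = 1)
    (hrec : ∀ n ≥ 2, μ n = μ (n - 1) +
      ∑ k ∈ Finset.range n, ((n - 1).choose k : ℝ) * p ^ (n - 1 - k) * q ^ k * μ k) :
    Monotone μ := by
  have hnn := mu_nonneg p q hp hq0 μ hμ0 hμ1 hrec
  apply monotone_nat_of_le_succ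
  intro n
  match n with
  | 0 => rw [hμ0, hμ1]; norm_num
  | (m+1) =>
    rw [hrec (m+2) (by omega)]
    have h2 : 0 ≤ ∑ k ∈ Finset.range (m+2),
        ((m+1).choose k : ℝ) * p ^ (m+1-k) * q ^ k * μ k := by
      apply Finset.sum_nonneg
      intro k hk
      have hk' := hnn k
      positivity
    rw [show m+2-1 = m+1 from rfl]
    linarith [h2]

lemma mu_bound (p q : ℝ) (hp : 0 < p) (hq0 : 0 < q) (hqp : q + p = 1)
    (μ : ℕ → ℝ) (hμ0 : μ 0 = 0) (hμ1 : μ 1 = 1)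
    (hrec : ∀ n ≥ 2, μ n = μ (n - 1) +
      ∑ k ∈ Finset.range n, ((n - 1).choose k : ℝ) * p ^ (n - 1 - k) * q ^ k * μ k) :
    ∀ n, |μ n| ≤ 2 ^ n := by
  have hnn := mu_nonneg p q hp hq0 μ hμ0 hμ1 hrec
  have hmono := mu_mono p q hp hq0 μ hμ0 hμ1 hrec
  have key : ∀ n, μ n ≤ 2 ^ n := by
    intro n
    induction n using Nat.strong_induction_on with
    | _ n ih =>
      match n with
      | 0 => rw [hμ0]; norm_num
      | 1 => rw [hμ1]; norm_num
      | (m+2) =>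
        rw [hrec (m+2) (by omega)]
        rw [show m+2-1 = m+1 from rfl]
        have hsum : ∑ k ∈ Finset.range (m+2),
            ((m+1).choose k : ℝ) * p ^ (m+1-k) * q ^ k * μ k ≤ μ (m+1) := by
          calc ∑ k ∈ Finset.range (m+2), ((m+1).choose k : ℝ) * p ^ (m+1-k) * q ^ k * μ k
              ≤ ∑ k ∈ Finset.range (m+2), ((m+1).choose k : ℝ) * p ^ (m+1-k) * q ^ k * μ (m+1) := by
                apply Finset.sum_le_sum
                intro k hk
                have hk1 : μ k ≤ μ (m+1) := hmono (Nat.lt_succ_iff.mp (Finset.mem_range.mp hk))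
                have : (0:ℝ) ≤ ((m+1).choose k : ℝ) * p ^ (m+1-k) * q ^ k := by positivity
                exact mul_le_mul_of_nonneg_left hk1 this
            _ = (∑ k ∈ Finset.range (m+2), ((m+1).choose k : ℝ) * p ^ (m+1-k) * q ^ k) * μ (m+1) := by
                rw [Finset.sum_mul]
            _ = μ (m+1) := by
                have := add_pow q p (m+1)
                rw [hqp, one_pow] at this
                have heq : ∑ k ∈ Finset.range (m+2), ((m+1).choose k : ℝ) * p ^ (m+1-k) * q ^ k
                    = ∑ k ∈ Finset.range (m+1+1), q ^ k * p ^ (m+1-k) * ((m+1).choose k : ℝ) := by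
                  apply Finset.sum_congr rfl; intro k _; ring
                rw [heq, ← this, one_mul]
        have ihm : μ (m+1) ≤ 2 ^ (m+1) := ih (m+1) (by omega)
        calc μ (m+1) + ∑ k ∈ Finset.range (m+2),
            ((m+1).choose k : ℝ) * p ^ (m+1-k) * q ^ k * μ k
            ≤ μ (m+1) + μ (m+1) := by linarith
          _ ≤ 2 ^ (m+1) + 2 ^ (m+1) := by linarith
          _ = 2 ^ (m+2) := by ring
  intro n
  rw [abs_of_nonneg (hnn n)]
  exact key n


lemma summable_aux (μ : ℕ → ℝ) (hb : ∀ n, |μ n| ≤ 2 ^ n) (z : ℂ) :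
    Summable fun n : ℕ => ‖(μ n : ℂ) * z ^ n / n.factorial‖ := by
  apply Summable.of_nonneg_of_le (fun n => norm_nonneg _) _
    (Real.summable_pow_div_factorial (2 * ‖z‖))
  intro n
  rw [norm_div, norm_mul, norm_pow, Complex.norm_natCast, Complex.norm_real,
    Real.norm_eq_abs, mul_pow]
  gcongr
  exact hb n

lemma hasDeriv_aux (μ : ℕ → ℝ) (hb : ∀ n, |μ n| ≤ 2 ^ n) (hμ0 : μ 0 = 0) (z : ℂ) :
    HasDerivAt (fun w : ℂ => ∑' n : ℕ, (μ n : ℂ) * w ^ n / n.factorial)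
      (∑' n : ℕ, (μ (n + 1) : ℂ) * z ^ n / n.factorial) z := by
  set R : ℝ := ‖z‖ + 1 with hR
  have hR0 : 0 < R := by positivity
  have hgg' : ∀ (n : ℕ) (y : ℂ),
      HasDerivAt (fun w : ℂ => (μ (n + 1) : ℂ) * w ^ (n + 1) / (n + 1).factorial)
        ((μ (n + 1) : ℂ) * y ^ n / n.factorial) y := by
    intro n y
    have h := ((hasDerivAt_pow (n + 1) y).const_mul ((μ (n + 1) : ℂ))).div_const
      (((n + 1).factorial : ℂ))
    refine HasDerivAt.congr_deriv h ?_
    simp only [Nat.add_sub_cancel]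
    have hnf : (n.factorial : ℂ) ≠ 0 := Nat.cast_ne_zero.mpr (Nat.factorial_ne_zero n)
    have hn1 : ((n : ℂ) + 1) ≠ 0 := Nat.cast_add_one_ne_zero n
    rw [Nat.factorial_succ, Nat.cast_mul, Nat.cast_add, Nat.cast_one]
    field_simp
  have hbound : ∀ (n : ℕ) (y : ℂ), y ∈ Metric.ball (0 : ℂ) R →
      ‖(μ (n + 1) : ℂ) * y ^ n / n.factorial‖ ≤ 2 * ((2 * R) ^ n / n.factorial) := by
    intro n y hy
    have hyR : ‖y‖ ≤ R := by
      rw [Metric.mem_ball, dist_zero_right] at hy; linarith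
    rw [norm_div, norm_mul, norm_pow, Complex.norm_natCast, Complex.norm_real,
      Real.norm_eq_abs]
    have h1 : |μ (n + 1)| * ‖y‖ ^ n ≤ 2 ^ (n + 1) * R ^ n := by
      have := hb (n + 1)
      gcongr
    calc |μ (n + 1)| * ‖y‖ ^ n / n.factorial ≤ 2 ^ (n + 1) * R ^ n / n.factorial := by
          gcongr
      _ = 2 * ((2 * R) ^ n / n.factorial) := by rw [mul_pow, pow_succ]; ring
  have hu : Summable fun n : ℕ => 2 * ((2 * R) ^ n / n.factorial) :=
    (Real.summable_pow_div_factorial (2 * R)).mul_left 2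
  have hg0 : Summable fun n : ℕ => (μ (n + 1) : ℂ) * z ^ (n + 1) / (n + 1).factorial := by
    have := ((summable_aux μ hb z).comp_injective Nat.succ_injective).of_norm
    exact this
  have h := hasDerivAt_tsum_of_isPreconnected hu Metric.isOpen_ball
    (convex_ball (0 : ℂ) R).isPreconnected (fun n y _ => hgg' n y) hbound
    (by rw [Metric.mem_ball, dist_zero_right]; linarith) hg0
    (by rw [Metric.mem_ball, dist_zero_right]; linarith)
  have hfun : (fun w : ℂ => ∑' n : ℕ, (μ n : ℂ) * w ^ n / n.factorial)
      = fun w : ℂ => ∑' n : ℕ, (μ (n + 1) : ℂ) * w ^ (n + 1) / (n + 1).factorial := by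
    funext w
    rw [Summable.tsum_eq_zero_add (summable_aux μ hb w).of_norm]
    simp [hμ0]
  rw [hfun]
  exact h

lemma series_eq (p q : ℝ) (μ : ℕ → ℝ) (hμ0 : μ 0 = 0) (hμ1 : μ 1 = 1)
    (hb : ∀ n, |μ n| ≤ 2 ^ n)
    (hrec : ∀ n ≥ 2, μ n = μ (n - 1) +
      ∑ k ∈ Finset.range n, ((n - 1).choose k : ℝ) * p ^ (n - 1 - k) * q ^ k * μ k)
    (z : ℂ) :
    ∑' n : ℕ, (μ (n + 1) : ℂ) * z ^ n / n.factorial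
      = (∑' n : ℕ, (μ n : ℂ) * z ^ n / n.factorial)
        + Complex.exp ((p : ℂ) * z) * (∑' n : ℕ, (μ n : ℂ) * ((q : ℂ) * z) ^ n / n.factorial)
        + 1 := by
  set f : ℕ → ℂ := fun k => (μ k : ℂ) * ((q : ℂ) * z) ^ k / k.factorial with hfdef
  set g : ℕ → ℂ := fun m => ((p : ℂ) * z) ^ m / m.factorial with hgdef
  have hf : Summable fun n => ‖f n‖ := summable_aux μ hb ((q : ℂ) * z)
  have hg : Summable fun n => ‖g n‖ := by
    simpa [hgdef, norm_div, norm_pow, Complex.norm_natCast] using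
      Real.summable_pow_div_factorial ‖(p : ℂ) * z‖
  have hexp : Complex.exp ((p : ℂ) * z) = ∑' n : ℕ, g n := by
    rw [Complex.exp_eq_exp_ℂ, NormedSpace.exp_eq_tsum_div]
  have hprod : (∑' n, f n) * (∑' n, g n)
      = ∑' n : ℕ, ∑ k ∈ range (n + 1), f k * g (n - k) :=
    tsum_mul_tsum_eq_tsum_sum_range_of_summable_norm hf hg
  have hterm : ∀ n : ℕ, (μ (n + 1) : ℂ) * z ^ n / n.factorial
      = (μ n : ℂ) * z ^ n / n.factorial + (∑ k ∈ range (n + 1), f k * g (n - k))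
        + (if n = 0 then (1 : ℂ) else 0) := by
    intro n
    match n with
    | 0 => simp [hfdef, hgdef, hμ0, hμ1]
    | (m + 1) =>
      have hr := hrec (m + 2) (by omega)
      rw [show m + 2 - 1 = m + 1 from rfl] at hr
      rw [show m + 1 + 1 = m + 2 from rfl, hr]
      rw [if_neg (Nat.succ_ne_zero m), add_zero]
      push_cast
      rw [add_mul, add_div]
      congr 1
      rw [Finset.sum_mul, Finset.sum_div]
      apply Finset.sum_congr rfl
      intro k hk
      have hk' : k ≤ m + 1 := Nat.lt_succ_iff.mp (Finset.mem_range.mp hk)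
      have hc : ((m + 1).choose k : ℂ) * k.factorial * ((m + 1) - k).factorial
          = ((m + 1).factorial : ℂ) := by
        exact_mod_cast Nat.choose_mul_factorial_mul_factorial hk'
      have hz2 : z ^ k * z ^ ((m + 1) - k) = z ^ (m + 1) := by
        rw [← pow_add, Nat.add_sub_cancel' hk']
      have h1 : (k.factorial : ℂ) ≠ 0 := Nat.cast_ne_zero.mpr (Nat.factorial_ne_zero _)
      have h2 : (((m + 1) - k).factorial : ℂ) ≠ 0 :=
        Nat.cast_ne_zero.mpr (Nat.factorial_ne_zero _)
      have h3 : ((m + 1).choose k : ℂ) ≠ 0 :=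
        Nat.cast_ne_zero.mpr (Nat.choose_pos hk').ne'
      simp only [hfdef, hgdef]
      rw [mul_pow, mul_pow, ← hc, ← hz2]
      field_simp
  have sA : Summable fun n : ℕ => (μ n : ℂ) * z ^ n / n.factorial :=
    (summable_aux μ hb z).of_norm
  have sB : Summable fun n : ℕ => ∑ k ∈ range (n + 1), f k * g (n - k) :=
    (summable_norm_sum_mul_range_of_summable_norm hf hg).of_norm
  have sD : Summable fun n : ℕ => (if n = 0 then (1 : ℂ) else 0) :=
    (hasSum_ite_eq (0 : ℕ) (1 : ℂ)).summable
  calc ∑' n : ℕ, (μ (n + 1) : ℂ) * z ^ n / n.factorial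
      = ∑' n : ℕ, ((μ n : ℂ) * z ^ n / n.factorial
          + (∑ k ∈ range (n + 1), f k * g (n - k)) + (if n = 0 then (1 : ℂ) else 0)) :=
        tsum_congr hterm
    _ = (∑' n : ℕ, ((μ n : ℂ) * z ^ n / n.factorial
          + ∑ k ∈ range (n + 1), f k * g (n - k)))
          + ∑' n : ℕ, (if n = 0 then (1 : ℂ) else 0) := Summable.tsum_add (sA.add sB) sD
    _ = (∑' n : ℕ, (μ n : ℂ) * z ^ n / n.factorial)
          + (∑' n : ℕ, ∑ k ∈ range (n + 1), f k * g (n - k))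
          + ∑' n : ℕ, (if n = 0 then (1 : ℂ) else 0) := by rw [Summable.tsum_add sA sB]
    _ = (∑' n : ℕ, (μ n : ℂ) * z ^ n / n.factorial)
          + Complex.exp ((p : ℂ) * z) * (∑' n : ℕ, (μ n : ℂ) * ((q : ℂ) * z) ^ n / n.factorial)
          + 1 := by
        rw [tsum_ite_eq, ← hprod, hexp, mul_comm]


theorem stmt_0 (p q : ℝ) (hp : 0 < p) (hp1 : p < 1) (hq : q = 1 - p)
    (μ : ℕ → ℝ) (hμ0 : μ 0 = 0) (hμ1 : μ 1 = 1)
    (hrec : ∀ n ≥ 2, μ n = μ (n - 1) +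
      ∑ k ∈ Finset.range n, ((n - 1).choose k : ℝ) * p ^ (n - 1 - k) * q ^ k * μ k)
    (ftil : ℂ → ℂ)
    (hftil : ∀ z : ℂ, ftil z = Complex.exp (-z) * ∑' n : ℕ, (μ n : ℂ) * z ^ n / n.factorial) :
    ftil 0 = 0 ∧ ∀ z : ℂ, deriv ftil z = ftil ((q : ℂ) * z) + Complex.exp (-z) := by
  have hq0 : 0 < q := by rw [hq]; linarith
  have hqp : q + p = 1 := by rw [hq]; ring
  have hb := mu_bound p q hp hq0 hqp μ hμ0 hμ1 hrec
  constructor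
  · rw [hftil 0]
    have h0 : ∑' n : ℕ, (μ n : ℂ) * (0 : ℂ) ^ n / n.factorial = 0 := by
      rw [tsum_eq_single 0 (fun n hn => by simp [zero_pow hn])]
      simp [hμ0]
    rw [h0, mul_zero]
  · intro z
    have hF' := hasDeriv_aux μ hb hμ0 z
    have hE : HasDerivAt (fun w : ℂ => Complex.exp (-w)) (-Complex.exp (-z)) z := by
      have h := (Complex.hasDerivAt_exp (-z)).comp z (hasDerivAt_neg z); simp at h; exact h
    have hD : HasDerivAt ftil
        ((-Complex.exp (-z)) * (∑' n : ℕ, (μ n : ℂ) * z ^ n / n.factorial)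
          + Complex.exp (-z) * (∑' n : ℕ, (μ (n + 1) : ℂ) * z ^ n / n.factorial)) z := by
      have hfn : ftil = fun w => Complex.exp (-w) * ∑' n : ℕ, (μ n : ℂ) * w ^ n / n.factorial :=
        funext hftil
      rw [hfn]
      exact hE.mul hF'
    rw [hD.deriv, series_eq p q μ hμ0 hμ1 hb hrec z, hftil ((q : ℂ) * z)]
    set A := ∑' n : ℕ, (μ n : ℂ) * z ^ n / n.factorial
    set B := ∑' n : ℕ, (μ n : ℂ) * ((q : ℂ) * z) ^ n / n.factorial
    have e1 : Complex.exp (-z) * Complex.exp ((p : ℂ) * z) = Complex.exp (-((q : ℂ) * z)) := by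
      rw [← Complex.exp_add]
      congr 1
      have hqc : (q : ℂ) = 1 - (p : ℂ) := by rw [hq]; push_cast; ring
      rw [hqc]; ring
    linear_combination B * e1
end

section
/- The sequence μ_n with μ_0 = 0 and μ_n defined via the binomial recurrence admits the closed form μ_n = ∑_{k=1}^{n} binom(n,k) ∑_{j=0}^{k-1} (-1)^j q^{(k-1-j)(k+j)/2} for all n ≥ 1. -/
open Finset

private lemma exp_step {k j : ℕ} (h : j < k) :
    (k + 1 - 1 - j) * (k + 1 + j) / 2 = k + (k - 1 - j) * (k + j) / 2 := by
  obtain ⟨d, rfl⟩ : ∃ d, k = j + d + 1 := ⟨k - j - 1, by omega⟩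
  have h1 : (j + d + 1 + 1 - 1 - j) = d + 1 := by omega
  have h2 : (j + d + 1 - 1 - j) = d := by omega
  rw [h1, h2]
  obtain ⟨c, hc⟩ : ∃ c, d * (j + d + 1 + j) = 2 * c := by
    obtain ⟨e, he⟩ := Nat.even_mul_succ_self d
    refine ⟨e + d * j, ?_⟩
    rw [show d * (j + d + 1 + j) = d * (d + 1) + 2 * (d * j) by ring, he]
    omega
  have h3 : (d + 1) * (j + d + 1 + 1 + j) = 2 * ((j + d + 1) + c) := by
    rw [show (d + 1) * (j + d + 1 + 1 + j) = 2 * (j + d + 1) + d * (j + d + 1 + j) by ring, hc]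
    ring
  rw [h3, hc]
  omega

private lemma a_rec (q : ℝ) (k : ℕ) :
    (∑ j ∈ range (k + 1), (-1 : ℝ) ^ j * q ^ ((k + 1 - 1 - j) * (k + 1 + j) / 2)) =
      q ^ k * (∑ j ∈ range k, (-1 : ℝ) ^ j * q ^ ((k - 1 - j) * (k + j) / 2)) + (-1) ^ k := by
  rw [Finset.sum_range_succ]
  have h0 : (k + 1 - 1 - k) * (k + 1 + k) / 2 = 0 := by
    rw [show k + 1 - 1 - k = 0 by omega]; simp
  rw [h0, pow_zero, mul_one, Finset.mul_sum]
  congr 1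
  refine Finset.sum_congr rfl fun j hj => ?_
  rw [exp_step (Finset.mem_range.mp hj), pow_add]
  ring

private lemma pascal_step (a : ℕ → ℝ) (m : ℕ) :
    ∑ k ∈ range (m + 2), ((m + 1).choose k : ℝ) * a k
      = (∑ k ∈ range (m + 1), (m.choose k : ℝ) * a k)
        + ∑ k ∈ range (m + 1), (m.choose k : ℝ) * a (k + 1) := by
  rw [Finset.sum_range_succ' _ (m + 1), Finset.sum_range_succ' (fun k => (m.choose k : ℝ) * a k) m]
  have h1 : ∀ k ∈ range (m + 1), ((m + 1).choose (k + 1) : ℝ) * a (k + 1)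
      = (m.choose k : ℝ) * a (k + 1) + (m.choose (k + 1) : ℝ) * a (k + 1) := by
    intro k _
    rw [Nat.choose_succ_succ]
    push_cast
    ring
  rw [Finset.sum_congr rfl h1, Finset.sum_add_distrib]
  rw [Finset.sum_range_succ (fun k => (m.choose (k + 1) : ℝ) * a (k + 1)) m]
  simp [Nat.choose_succ_self]
  ring

private lemma alt_sum (m : ℕ) (hm : m ≠ 0) :
    ∑ k ∈ range (m + 1), (m.choose k : ℝ) * (-1) ^ k = 0 := by
  have h := Int.alternating_sum_range_choose_of_ne hm
  have h2 : ((∑ i ∈ range (m + 1), ((-1) ^ i * m.choose i : ℤ) : ℤ) : ℝ) = 0 := by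
    rw [h]; norm_num
  push_cast at h2
  rw [← h2]
  exact Finset.sum_congr rfl fun k _ => by ring

private lemma key_double (p q : ℝ) (hpq : p + q = 1) (a : ℕ → ℝ) (m : ℕ) :
    ∑ k ∈ range (m + 1), (m.choose k : ℝ) * p ^ (m - k) * q ^ k *
        (∑ j ∈ range (k + 1), (k.choose j : ℝ) * a j)
      = ∑ k ∈ range (m + 1), (m.choose k : ℝ) * q ^ k * a k := by
  have step1 : ∀ k ∈ range (m + 1),
      (m.choose k : ℝ) * p ^ (m - k) * q ^ k * (∑ j ∈ range (k + 1), (k.choose j : ℝ) * a j)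
        = ∑ j ∈ range (k + 1),
            (m.choose k : ℝ) * (k.choose j : ℝ) * p ^ (m - k) * q ^ k * a j := by
    intro k _
    rw [Finset.mul_sum]
    exact Finset.sum_congr rfl fun j _ => by ring
  rw [Finset.sum_congr rfl step1]
  rw [Finset.sum_comm' (s := range (m + 1)) (t := fun k => range (k + 1))
    (t' := range (m + 1)) (s' := fun j => Finset.Icc j m)
    (by intro k j; simp only [Finset.mem_range, Finset.mem_Icc]; omega)]
  refine Finset.sum_congr rfl fun j hj => ?_
  have hjm : j ≤ m := by simpa using Nat.lt_succ_iff.mp (Finset.mem_range.mp hj)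
  -- reindex k = j + i
  have reindex : ∑ k ∈ Finset.Icc j m,
      (m.choose k : ℝ) * (k.choose j : ℝ) * p ^ (m - k) * q ^ k * a j
      = ∑ i ∈ range (m - j + 1),
      (m.choose (j + i) : ℝ) * ((j + i).choose j : ℝ) * p ^ (m - (j + i)) * q ^ (j + i) * a j := by
    refine Finset.sum_nbij' (fun k => k - j) (fun i => j + i) ?_ ?_ ?_ ?_ ?_
    · intro k hk; simp only [Finset.mem_Icc] at hk; simp only [Finset.mem_range]; omega
    · intro i hi; simp only [Finset.mem_range] at hi; simp only [Finset.mem_Icc]; omega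
    · intro k hk; simp only [Finset.mem_Icc] at hk; omega
    · intro i hi; omega
    · intro k hk
      simp only [Finset.mem_Icc] at hk
      rw [show j + (k - j) = k by omega]
  rw [reindex]
  have term : ∀ i ∈ range (m - j + 1),
      (m.choose (j + i) : ℝ) * ((j + i).choose j : ℝ) * p ^ (m - (j + i)) * q ^ (j + i) * a j
      = (m.choose j : ℝ) * q ^ j * a j * (q ^ i * p ^ (m - j - i) * ((m - j).choose i : ℝ)) := by
    intro i hi
    have hile : i ≤ m - j := by simpa using Nat.lt_succ_iff.mp (Finset.mem_range.mp hi)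
    have hc : (m.choose (j + i) : ℝ) * ((j + i).choose j : ℝ)
        = (m.choose j : ℝ) * ((m - j).choose i : ℝ) := by
      have := Nat.choose_mul (n := m) (k := j + i) (s := j) (by omega)
      have h' : m.choose (j + i) * (j + i).choose j = m.choose j * (m - j).choose i := by
        rw [this, show j + i - j = i by omega]
      exact_mod_cast congrArg (fun x : ℕ => (x : ℝ)) h'
    rw [show m - (j + i) = m - j - i by omega, hc, pow_add]
    ring
  rw [Finset.sum_congr rfl term, ← Finset.mul_sum]
  have hbin : ∑ i ∈ range (m - j + 1), q ^ i * p ^ (m - j - i) * ((m - j).choose i : ℝ) = 1 := by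
    rw [← add_pow q p (m - j), show q + p = 1 by linarith, one_pow]
  rw [hbin, mul_one]

theorem stmt_2 (p q : ℝ) (hp : 0 < p) (hp1 : p < 1) (hq : q = 1 - p)
    (μ : ℕ → ℝ) (hμ0 : μ 0 = 0) (hμ1 : μ 1 = 1)
    (hrec : ∀ n ≥ 2, μ n = μ (n - 1) +
      ∑ k ∈ Finset.range n, ((n - 1).choose k : ℝ) * p ^ (n - 1 - k) * q ^ k * μ k) :
    ∀ n : ℕ, 1 ≤ n →
      μ n = ∑ k ∈ Finset.Icc 1 n, (n.choose k : ℝ) *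
        ∑ j ∈ Finset.range k, (-1 : ℝ) ^ j * q ^ ((k - 1 - j) * (k + j) / 2) := by
  have hpq : p + q = 1 := by rw [hq]; ring
  set a : ℕ → ℝ := fun k => ∑ j ∈ range k, (-1 : ℝ) ^ j * q ^ ((k - 1 - j) * (k + j) / 2) with ha
  have ha0 : a 0 = 0 := by simp [ha]
  have ha1 : a 1 = 1 := by simp [ha]
  have harec : ∀ k, a (k + 1) = q ^ k * a k + (-1) ^ k := fun k => a_rec q k
  have main : ∀ n, μ n = ∑ k ∈ range (n + 1), (n.choose k : ℝ) * a k := by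
    intro n
    induction n using Nat.strong_induction_on with
    | _ n ih =>
      match n with
      | 0 => simp [hμ0, ha0]
      | 1 =>
        rw [hμ1]
        simp [Finset.sum_range_succ, ha0, ha1]
      | (m + 2) =>
        rw [hrec (m + 2) (by omega)]
        have h1 : m + 2 - 1 = m + 1 := by omega
        rw [h1]
        rw [ih (m + 1) (by omega)]
        have h2 : ∀ k ∈ range (m + 2),
            ((m + 1).choose k : ℝ) * p ^ (m + 1 - k) * q ^ k * μ k
            = ((m + 1).choose k : ℝ) * p ^ (m + 1 - k) * q ^ k *
                (∑ j ∈ range (k + 1), (k.choose j : ℝ) * a j) := by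
          intro k hk
          rw [ih k (Finset.mem_range.mp hk |>.trans_le (by omega))]
        rw [Finset.sum_congr rfl h2, key_double p q hpq a (m + 1)]
        rw [pascal_step a (m + 1)]
        congr 1
        have h3 : ∀ k ∈ range (m + 2), ((m + 1).choose k : ℝ) * a (k + 1)
            = ((m + 1).choose k : ℝ) * q ^ k * a k + ((m + 1).choose k : ℝ) * (-1) ^ k := by
          intro k _
          rw [harec k]; ring
        rw [Finset.sum_congr rfl h3, Finset.sum_add_distrib,
          alt_sum (m + 1) (by omega), add_zero]
  intro n hn
  rw [main n]
  have hins : range (n + 1) = insert 0 (Finset.Icc 1 n) := by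
    ext x
    simp only [Finset.mem_range, Finset.mem_insert, Finset.mem_Icc]
    omega
  rw [hins, Finset.sum_insert (by simp)]
  simp [ha0]
  rfl
end

section
/- The modified Laplace transform f̃*(s) = (1/s) ∫_0^∞ e^{-x/s} f̃(x) dx of a solution f̃ of f̃'(z) = f̃(qz) + e^{-z}, f̃(0) = 0, satisfies the functional equation f̃*(s) = s f̃*(qs) + s/(1+s) for Re(s) > 0. -/
open MeasureTheory Set Filter

private lemma aux_norm (x : ℝ) (w : ℂ) (r : ℝ) :
    ‖Complex.exp (-(x:ℂ) * w) * (r : ℂ)‖ = Real.exp (-(w.re * x)) * |r| := by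
  rw [norm_mul, Complex.norm_exp, Complex.norm_real, Real.norm_eq_abs]
  congr 2
  simp [Complex.mul_re]
  ring

private lemma aux_int (ftil : ℝ → ℝ) (hcont : ContinuousOn ftil (Set.Ici 0))
    (hgrow : ∀ ε : ℝ, 0 < ε → ∃ C : ℝ, ∀ x : ℝ, 0 ≤ x → |ftil x| ≤ C * Real.exp (ε * x))
    (w : ℂ) (hw : 0 < w.re) (c : ℝ) (hc : 0 < c) :
    IntegrableOn (fun x : ℝ => Complex.exp (-(x:ℂ) * w) * (ftil (c * x) : ℂ)) (Set.Ioi 0) := by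
  obtain ⟨C, hC⟩ := hgrow (w.re / (2 * c)) (by positivity)
  have hmeas : AEStronglyMeasurable
      (fun x : ℝ => Complex.exp (-(x:ℂ) * w) * (ftil (c * x) : ℂ))
      (volume.restrict (Set.Ioi 0)) := by
    apply ContinuousOn.aestronglyMeasurable _ measurableSet_Ioi
    apply ContinuousOn.mul
    · exact (Complex.continuous_exp.comp (by continuity)).continuousOn
    · exact Complex.continuous_ofReal.comp_continuousOn
        (hcont.comp (continuous_const.mul continuous_id).continuousOn
          (fun x hx => Set.mem_Ici.mpr (mul_nonneg hc.le (le_of_lt hx))))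
  refine Integrable.mono' ((exp_neg_integrableOn_Ioi 0 (show (0:ℝ) < w.re / 2 by positivity)).const_mul C) hmeas ?_
  filter_upwards [ae_restrict_mem measurableSet_Ioi] with x hx
  rw [aux_norm]
  calc Real.exp (-(w.re * x)) * |ftil (c * x)|
      ≤ Real.exp (-(w.re * x)) * (C * Real.exp (w.re / (2 * c) * (c * x))) :=
        mul_le_mul_of_nonneg_left (hC _ (mul_nonneg hc.le (le_of_lt hx))) (Real.exp_pos _).le
    _ = C * Real.exp (-(w.re / 2) * x) := by
        rw [mul_comm, mul_assoc, ← Real.exp_add]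
        congr 2
        field_simp
        ring

private lemma aux_exp_tend_zero (C a : ℝ) (ha : 0 < a) :
    Tendsto (fun x : ℝ => C * Real.exp (-a * x)) atTop (nhds 0) := by
  have h0 : Tendsto (fun x : ℝ => -a * x) atTop atBot := by
    have h1 : Tendsto (fun x : ℝ => a * x) atTop atTop :=
      Tendsto.const_mul_atTop ha tendsto_id
    simpa [Function.comp_def, neg_mul] using tendsto_neg_atTop_atBot.comp h1
  simpa using (Real.tendsto_exp_atBot.comp h0).const_mul C

private lemma aux_tend (ftil : ℝ → ℝ)
    (hgrow : ∀ ε : ℝ, 0 < ε → ∃ C : ℝ, ∀ x : ℝ, 0 ≤ x → |ftil x| ≤ C * Real.exp (ε * x))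
    (w : ℂ) (hw : 0 < w.re) :
    Tendsto (fun x : ℝ => Complex.exp (-(x:ℂ) * w) * (ftil x : ℂ)) atTop (nhds 0) := by
  obtain ⟨C, hC⟩ := hgrow (w.re / 2) (by positivity)
  refine squeeze_zero_norm' ?_ (aux_exp_tend_zero C (w.re / 2) (by positivity))
  filter_upwards [eventually_ge_atTop (0:ℝ)] with x hx
  rw [aux_norm]
  calc Real.exp (-(w.re * x)) * |ftil x|
      ≤ Real.exp (-(w.re * x)) * (C * Real.exp (w.re / 2 * x)) :=
        mul_le_mul_of_nonneg_left (hC _ hx) (Real.exp_pos _).le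
    _ = C * Real.exp (-(w.re / 2) * x) := by
        rw [mul_comm, mul_assoc, ← Real.exp_add]; congr 2; ring

private lemma aux_one_grow : ∀ ε : ℝ, 0 < ε → ∃ C : ℝ, ∀ x : ℝ, 0 ≤ x →
    |(1:ℝ)| ≤ C * Real.exp (ε * x) :=
  fun ε hε => ⟨1, fun x hx => by
    rw [abs_one, one_mul]; exact Real.one_le_exp (mul_nonneg hε.le hx)⟩

private lemma aux_cexp_tend (w : ℂ) (hw : 0 < w.re) :
    Tendsto (fun x : ℝ => Complex.exp (-(x:ℂ) * w)) atTop (nhds 0) := by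
  simpa using aux_tend (fun _ => 1) aux_one_grow w hw

private lemma aux_cexp_int (w : ℂ) (hw : 0 < w.re) :
    IntegrableOn (fun x : ℝ => Complex.exp (-(x:ℂ) * w)) (Set.Ioi 0) := by
  simpa using aux_int (fun _ => 1) continuousOn_const aux_one_grow w hw 1 one_pos

private lemma aux_cexp_val (w : ℂ) (hw : 0 < w.re) :
    ∫ x in Set.Ioi (0:ℝ), Complex.exp (-(x:ℂ) * w) = 1 / w := by
  have hw0 : w ≠ 0 := fun h => by simp [h] at hw
  have hd : ∀ x ∈ Set.Ici (0:ℝ), HasDerivAt (fun x : ℝ => (-1/w) * Complex.exp (-(x:ℂ) * w))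
      (Complex.exp (-(x:ℂ) * w)) x := by
    intro x _
    have h1 : HasDerivAt (fun z : ℂ => Complex.exp (-z * w)) (Complex.exp (-(x:ℂ) * w) * (-w)) (x:ℂ) := by
      have := (((hasDerivAt_id (x:ℂ)).neg.mul_const w).cexp)
      simpa using this
    have h2 := (h1.comp_ofReal).const_mul (-1/w)
    refine h2.congr_deriv ?_
    rw [show (-1/w) * (Complex.exp (-(x:ℂ) * w) * (-w)) = Complex.exp (-(x:ℂ) * w) * (w / w) by ring, div_self hw0, mul_one]
  have htend : Tendsto (fun x : ℝ => (-1/w) * Complex.exp (-(x:ℂ) * w)) atTop (nhds 0) := by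
    simpa using (aux_cexp_tend w hw).const_mul (-1/w)
  have := integral_Ioi_of_hasDerivAt_of_tendsto' hd (aux_cexp_int w hw) htend
  rw [this]
  simp
  field_simp

theorem stmt_3 (q : ℝ) (hq0 : 0 < q) (hq1 : q < 1)
    (ftil : ℝ → ℝ) (hf0 : ftil 0 = 0)
    (hderiv : ∀ x : ℝ, 0 ≤ x → HasDerivAt ftil (ftil (q * x) + Real.exp (-x)) x)
    (hgrow : ∀ ε : ℝ, 0 < ε → ∃ C : ℝ, ∀ x : ℝ, 0 ≤ x → |ftil x| ≤ C * Real.exp (ε * x))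
    (Fstar : ℂ → ℂ)
    (hFstar : ∀ s : ℂ, Fstar s =
      (1 / s) * ∫ x in Set.Ioi (0 : ℝ), Complex.exp (-(x : ℂ) / s) * (ftil x : ℂ)) :
    ∀ s : ℂ, 0 < s.re → Fstar s = s * Fstar ((q : ℂ) * s) + s / (1 + s) := by
  intro s hs
  have hs0 : s ≠ 0 := fun h => by simp [h] at hs
  have hq0' : (q:ℂ) ≠ 0 := by exact_mod_cast hq0.ne'
  have hcont : ContinuousOn ftil (Set.Ici 0) :=
    fun x hx => (hderiv x hx).continuousAt.continuousWithinAt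
  have hwinv : 0 < (s⁻¹).re := by
    rw [Complex.inv_re]
    exact div_pos hs (Complex.normSq_pos.mpr hs0)
  have hqs : 0 < ((q:ℂ) * s).re := by
    simp [Complex.mul_re]
    positivity
  have hqsinv : 0 < (((q:ℂ) * s)⁻¹).re := by
    rw [Complex.inv_re]
    exact div_pos hqs (Complex.normSq_pos.mpr (mul_ne_zero hq0' hs0))
  have hw1 : 0 < (s⁻¹ + 1).re := by
    rw [Complex.add_re, Complex.one_re]
    linarith
  have hw1' : s⁻¹ + 1 ≠ 0 := fun h => by rw [h] at hw1; simp at hw1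
  set I₁ : ℂ := ∫ x in Set.Ioi (0:ℝ), Complex.exp (-(x:ℂ) * s⁻¹) * (ftil x : ℂ) with hI₁
  set I₂ : ℂ := ∫ x in Set.Ioi (0:ℝ), Complex.exp (-(x:ℂ) * ((q:ℂ)*s)⁻¹) * (ftil x : ℂ) with hI₂
  -- main FTC identity
  have key : ∫ x in Set.Ioi (0:ℝ),
      ((-s⁻¹) * (Complex.exp (-(x:ℂ) * s⁻¹) * (ftil x : ℂ))
        + (Complex.exp (-(x:ℂ) * s⁻¹) * (ftil (q * x) : ℂ)
          + Complex.exp (-(x:ℂ) * (s⁻¹ + 1)))) = 0 := by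
    have hd : ∀ x ∈ Set.Ici (0:ℝ),
        HasDerivAt (fun x : ℝ => Complex.exp (-(x:ℂ) * s⁻¹) * (ftil x : ℂ))
          ((-s⁻¹) * (Complex.exp (-(x:ℂ) * s⁻¹) * (ftil x : ℂ))
            + (Complex.exp (-(x:ℂ) * s⁻¹) * (ftil (q * x) : ℂ)
              + Complex.exp (-(x:ℂ) * (s⁻¹ + 1)))) x := by
      intro x hx
      have h1 : HasDerivAt (fun y : ℝ => Complex.exp (-(y:ℂ) * s⁻¹))
          (Complex.exp (-(x:ℂ) * s⁻¹) * (-s⁻¹)) x := by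
        have h : HasDerivAt (fun z : ℂ => Complex.exp (-z * s⁻¹))
            (Complex.exp (-(x:ℂ) * s⁻¹) * (-s⁻¹)) (x:ℂ) := by
          have := ((hasDerivAt_id (x:ℂ)).neg.mul_const s⁻¹).cexp
          simpa using this
        exact h.comp_ofReal
      have h2 : HasDerivAt (fun y : ℝ => (ftil y : ℂ))
          ((ftil (q * x) + Real.exp (-x) : ℝ) : ℂ) x := (hderiv x hx).ofReal_comp
      have hmul := h1.mul h2
      refine hmul.congr_deriv ?_
      have hexp : Complex.exp (-(x:ℂ) * (s⁻¹ + 1))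
          = Complex.exp (-(x:ℂ) * s⁻¹) * Complex.exp (-(x:ℂ)) := by
        rw [← Complex.exp_add]; ring_nf
      rw [hexp]
      push_cast [Complex.ofReal_exp]
      ring
    have i1 := aux_int ftil hcont hgrow s⁻¹ hwinv 1 one_pos
    simp only [one_mul] at i1
    have i2 := aux_int ftil hcont hgrow s⁻¹ hwinv q hq0
    have i3 := aux_cexp_int (s⁻¹ + 1) hw1
    have i23 : IntegrableOn (fun x : ℝ =>
        Complex.exp (-(x:ℂ) * s⁻¹) * (ftil (q * x) : ℂ)
          + Complex.exp (-(x:ℂ) * (s⁻¹ + 1))) (Set.Ioi 0) := i2.add i3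
    have hint : IntegrableOn (fun x : ℝ =>
        (-s⁻¹) * (Complex.exp (-(x:ℂ) * s⁻¹) * (ftil x : ℂ))
          + (Complex.exp (-(x:ℂ) * s⁻¹) * (ftil (q * x) : ℂ)
            + Complex.exp (-(x:ℂ) * (s⁻¹ + 1)))) (Set.Ioi 0) :=
      (i1.const_mul (-s⁻¹)).add i23
    have htend : Tendsto (fun x : ℝ => Complex.exp (-(x:ℂ) * s⁻¹) * (ftil x : ℂ))
        atTop (nhds 0) := aux_tend ftil hgrow s⁻¹ hwinv
    have := integral_Ioi_of_hasDerivAt_of_tendsto' hd hint htend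
    rw [this]
    simp [hf0]
  -- split the integral
  have i1 := aux_int ftil hcont hgrow s⁻¹ hwinv 1 one_pos
  simp only [one_mul] at i1
  have i2 := aux_int ftil hcont hgrow s⁻¹ hwinv q hq0
  have i3 := aux_cexp_int (s⁻¹ + 1) hw1
  have i23 : IntegrableOn (fun x : ℝ =>
      Complex.exp (-(x:ℂ) * s⁻¹) * (ftil (q * x) : ℂ)
        + Complex.exp (-(x:ℂ) * (s⁻¹ + 1))) (Set.Ioi 0) := i2.add i3
  rw [integral_add (i1.const_mul (-s⁻¹)) i23, integral_add i2 i3,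
    integral_const_mul, aux_cexp_val _ hw1] at key
  -- substitution for the middle integral
  have hsub : ∫ x in Set.Ioi (0:ℝ), Complex.exp (-(x:ℂ) * s⁻¹) * (ftil (q * x) : ℂ)
      = (q:ℂ)⁻¹ * I₂ := by
    have hcomp := integral_comp_mul_left_Ioi
      (fun u : ℝ => Complex.exp (-(u:ℂ) * ((q:ℂ)*s)⁻¹) * (ftil u : ℂ)) 0 hq0
    rw [mul_zero] at hcomp
    have heq : ∀ x : ℝ, Complex.exp (-((q*x : ℝ):ℂ) * ((q:ℂ)*s)⁻¹) * (ftil (q*x) : ℂ)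
        = Complex.exp (-(x:ℂ) * s⁻¹) * (ftil (q * x) : ℂ) := by
      intro x
      congr 2
      push_cast
      rw [mul_inv]
      field_simp
    simp only [heq] at hcomp
    rw [hcomp, Complex.real_smul, Complex.ofReal_inv, ← hI₂]
  rw [hsub] at key
  -- finish with algebra
  have h1s : (1 : ℂ) + s ≠ 0 := fun h => by
    have : ((1:ℂ) + s).re = 0 := by rw [h]; rfl
    rw [Complex.add_re, Complex.one_re] at this
    linarith
  have e1 : Fstar s = s⁻¹ * I₁ := by
    rw [hFstar s, hI₁]
    simp only [div_eq_mul_inv, one_mul]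
  have e2 : Fstar ((q:ℂ) * s) = ((q:ℂ)*s)⁻¹ * I₂ := by
    rw [hFstar _, hI₂]
    simp only [div_eq_mul_inv, one_mul]
  rw [e1, e2]
  have key' : (q:ℂ)⁻¹ * I₂ + 1 / (s⁻¹ + 1) = s⁻¹ * I₁ := by linear_combination key
  rw [← key']
  field_simp
end

section
/- The bilateral series F(s) = ∑_{j∈ℤ} q^{j(j+1)/2} s^{j+1}/(1 + q^j s) converges absolutely for every real s > 0 and satisfies the functional equation F(s) = s·F(qs). -/
open Filter

private lemma tri_succ_nat (n : ℕ) : (n+1)*(n+2)/2 = n*(n+1)/2 + (n+1) := by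
  obtain ⟨k, hk⟩ := Nat.even_mul_succ_self n
  have hb : (n+1)*(n+2) = n*(n+1) + 2*(n+1) := by ring
  omega

private lemma tri_succ_int (j : ℤ) : (j+1)*((j+1)+1)/2 = j*(j+1)/2 + (j+1) := by
  obtain ⟨k, hk⟩ := Int.even_mul_succ_self j
  have hb : (j+1)*((j+1)+1) = j*(j+1) + 2*(j+1) := by ring
  omega

private lemma aux_summable (q t : ℝ) (hq0 : 0 < q) (hq1 : q < 1) (ht : 0 < t) :
    Summable (fun n : ℕ => q ^ (n*(n+1)/2) * t ^ n) := by
  apply summable_of_ratio_norm_eventually_le (r := 1/2) (by norm_num)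
  have h : Tendsto (fun n : ℕ => q ^ (n+1) * t) atTop (nhds 0) := by
    have h0 := tendsto_pow_atTop_nhds_zero_of_lt_one hq0.le hq1
    simpa using ((h0.comp (tendsto_add_atTop_nat 1)).mul_const t)
  filter_upwards [h.eventually (gt_mem_nhds (by norm_num : (0:ℝ) < 1/2))] with n hn
  have hpos : (0:ℝ) < q ^ (n*(n+1)/2) * t ^ n := by positivity
  have hpos' : (0:ℝ) < q ^ ((n+1)*(n+2)/2) * t ^ (n+1) := by positivity
  rw [Real.norm_eq_abs, Real.norm_eq_abs, abs_of_pos hpos, abs_of_pos hpos']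
  have heq : q ^ ((n+1)*(n+2)/2) * t ^ (n+1)
      = (q ^ (n*(n+1)/2) * t ^ n) * (q ^ (n+1) * t) := by
    rw [tri_succ_nat, pow_add, pow_succ]; ring
  rw [heq]
  nlinarith [hn.le, hpos]

theorem stmt_5 (q : ℝ) (hq0 : 0 < q) (hq1 : q < 1)
    (F : ℝ → ℝ)
    (hF : ∀ s : ℝ, F s =
      ∑' j : ℤ, q ^ (j * (j + 1) / 2) * s ^ (j + 1) / (1 + q ^ j * s)) :
    ∀ s : ℝ, 0 < s →
      (Summable fun j : ℤ =>
        |q ^ (j * (j + 1) / 2) * s ^ (j + 1) / (1 + q ^ j * s)|) ∧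
      F s = s * F (q * s) := by
  have hqne : q ≠ 0 := hq0.ne'
  intro s hs
  set a : ℤ → ℝ → ℝ := fun j t => q ^ (j * (j + 1) / 2) * t ^ (j + 1) / (1 + q ^ j * t) with ha
  have hden : ∀ (j : ℤ) (t : ℝ), 0 < t → (0:ℝ) < 1 + q ^ j * t := by
    intro j t ht
    have : (0:ℝ) < q ^ j * t := by positivity
    linarith
  have hapos : ∀ (j : ℤ) (t : ℝ), 0 < t → 0 < a j t := by
    intro j t ht
    apply div_pos (by positivity) (hden j t ht)
  constructor
  · -- summability
    apply Summable.of_nat_of_neg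
    · -- nonnegative part
      apply Summable.of_nonneg_of_le (fun n => abs_nonneg _)
        (f := fun n : ℕ => s * (q ^ (n*(n+1)/2) * s ^ n))
      · intro n
        rw [abs_of_pos (hapos n s hs)]
        have hcast : ((n:ℤ) * ((n:ℤ) + 1) / 2) = ((n*(n+1)/2 : ℕ) : ℤ) := by
          obtain ⟨k, hk⟩ := Nat.even_mul_succ_self n
          push_cast
          omega
        have h1 : a n s ≤ q ^ ((n:ℤ) * ((n:ℤ) + 1) / 2) * s ^ ((n:ℤ) + 1) := by
          rw [ha]
          refine div_le_self (by positivity) ?_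
          have : (0:ℝ) < q ^ (n:ℤ) * s := by positivity
          linarith
        calc a n s ≤ q ^ ((n:ℤ) * ((n:ℤ) + 1) / 2) * s ^ ((n:ℤ) + 1) := h1
          _ = s * (q ^ (n*(n+1)/2) * s ^ n) := by
              rw [hcast, zpow_natCast]
              have : ((n:ℤ) + 1) = ((n + 1 : ℕ) : ℤ) := by push_cast; ring
              rw [this, zpow_natCast, pow_succ]; ring
      · exact (aux_summable q s hq0 hq1 hs).mul_left s
    · -- negative part
      apply Summable.of_nonneg_of_le (fun n => abs_nonneg _)
        (f := fun n : ℕ => q ^ (n*(n+1)/2) * (s⁻¹) ^ n)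
      · intro n
        rw [abs_of_pos (hapos (-n) s hs)]
        have h1 : a (-n) s ≤ q ^ ((-n:ℤ) * ((-n:ℤ) + 1) / 2) * s ^ ((-n:ℤ) + 1) / (q ^ (-n:ℤ) * s) := by
          rw [ha]
          apply div_le_div_of_nonneg_left (by positivity) (by positivity)
          linarith
        have h2 : q ^ ((-n:ℤ) * ((-n:ℤ) + 1) / 2) * s ^ ((-n:ℤ) + 1) / (q ^ (-n:ℤ) * s)
            = q ^ (n*(n+1)/2) * (s⁻¹) ^ n := by
          have hcast : ((-n:ℤ) * ((-n:ℤ) + 1) / 2) - (-(n:ℤ)) = ((n*(n+1)/2 : ℕ) : ℤ) := by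
            obtain ⟨k, hk⟩ := Nat.even_mul_succ_self n
            have hb : (-n:ℤ) * ((-n:ℤ) + 1) = (n:ℤ)*(n+1) - 2*n := by push_cast; ring
            push_cast
            omega
          have e1 : q ^ ((-n:ℤ) * ((-n:ℤ) + 1) / 2) / q ^ (-(n:ℤ)) = q ^ (n*(n+1)/2) := by
            rw [← zpow_sub₀ hqne, hcast, zpow_natCast]
          have e2 : s ^ ((-n:ℤ) + 1) = (s⁻¹) ^ n * s := by
            rw [zpow_add_one₀ hs.ne']
            congr 1
            rw [zpow_neg, zpow_natCast, ← inv_pow]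
          calc q ^ ((-n:ℤ) * ((-n:ℤ) + 1) / 2) * s ^ ((-n:ℤ) + 1) / (q ^ (-n:ℤ) * s)
              = (q ^ ((-n:ℤ) * ((-n:ℤ) + 1) / 2) / q ^ (-(n:ℤ))) * (s ^ ((-n:ℤ) + 1) / s) := by
                ring
            _ = q ^ (n*(n+1)/2) * ((s⁻¹) ^ n * s / s) := by rw [e1, e2]
            _ = q ^ (n*(n+1)/2) * (s⁻¹) ^ n := by
                rw [mul_div_assoc, div_self hs.ne', mul_one]
        calc a (-n) s ≤ _ := h1
          _ = _ := h2
      · exact aux_summable q (s⁻¹) hq0 hq1 (by positivity)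
  · -- functional equation
    have key : ∀ j : ℤ, s * a j (q * s) = a (j+1) s := by
      intro j
      rw [ha]
      simp only
      have hd : 1 + q ^ j * (q * s) = 1 + q ^ (j+1) * s := by
        rw [zpow_add_one₀ hqne]; ring
      rw [hd, tri_succ_int, zpow_add₀ hqne (j*(j+1)/2) (j+1), mul_zpow,
        zpow_add_one₀ hs.ne' (j+1)]
      have hD := (hden (j+1) s hs).ne'
      generalize q ^ (j*(j+1)/2) = X
      generalize hP : q ^ (j+1) = P
      rw [hP] at hD
      generalize s ^ (j+1) = S
      field_simp
    rw [hF s, hF (q*s), ← tsum_mul_left]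
    have : ∀ j : ℤ, s * a j (q * s) = (fun j : ℤ => a j s) ((Equiv.addRight (1:ℤ)) j) := by
      intro j; rw [key]; rfl
    calc (∑' j : ℤ, a j s) = ∑' j : ℤ, (fun j : ℤ => a j s) ((Equiv.addRight (1:ℤ)) j) :=
          ((Equiv.addRight (1:ℤ)).tsum_eq (fun j : ℤ => a j s)).symm
      _ = ∑' j : ℤ, s * a j (q * s) := by
          exact tsum_congr fun j => (this j).symm
end

section
/- If F: (0,∞) → (0,∞) is continuous and satisfies F(s) = s·F(qs) for all s > 0, then for every x > 1, F(x) = x^{1/2} exp((log x)²/(2 log κ)) · G(log_κ x), where κ = 1/q and G(u) := q^{({u}² + {u})/2} F(q^{-{u}}) ({u} denoting the fractional part of u) is a continuous positive function satisfying G(u+1) = G(u) for all u. -/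
theorem stmt_6 (q : ℝ) (hq0 : 0 < q) (hq1 : q < 1) (κ : ℝ) (hκ : κ = 1 / q)
    (F : ℝ → ℝ) (hFcont : ContinuousOn F (Set.Ioi 0))
    (hFpos : ∀ s : ℝ, 0 < s → 0 < F s)
    (hFeq : ∀ s : ℝ, 0 < s → F s = s * F (q * s))
    (G : ℝ → ℝ)
    (hG : ∀ u : ℝ, G u =
      q ^ (((Int.fract u) ^ 2 + Int.fract u) / 2) * F (q ^ (-(Int.fract u)))) :
    (∀ u : ℝ, G (u + 1) = G u) ∧ (∀ u : ℝ, 0 < G u) ∧ Continuous G ∧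
    ∀ x : ℝ, 1 < x →
      F x = x ^ ((1 : ℝ) / 2) * Real.exp ((Real.log x) ^ 2 / (2 * Real.log κ)) *
        G (Real.log x / Real.log κ) := by
  have hqne : q ≠ 0 := ne_of_gt hq0
  have step : ∀ v : ℝ, F (q ^ (-(v + 1))) = q ^ (-(v + 1)) * F (q ^ (-v)) := by
    intro v
    have h1 : (0:ℝ) < q ^ (-(v + 1)) := Real.rpow_pos_of_pos hq0 _
    have h2 : q * q ^ (-(v + 1)) = q ^ (-v) := by
      nth_rewrite 1 [← Real.rpow_one q]
      rw [← Real.rpow_add hq0]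
      norm_num
    have := hFeq _ h1
    rw [h2] at this
    exact this
  have key : ∀ n : ℕ, ∀ t : ℝ,
      F (q ^ (-(t + n))) =
        q ^ (-(((t + n) ^ 2 + (t + n)) / 2) + (t ^ 2 + t) / 2) * F (q ^ (-t)) := by
    intro n
    induction n with
    | zero => intro t; norm_num
    | succ n ih =>
      intro t
      have e1 : (t + (n + 1 : ℕ) : ℝ) = (t + n) + 1 := by push_cast; ring
      rw [e1, step (t + n), ih t, ← mul_assoc, ← Real.rpow_add hq0]
      congr 2
      push_cast
      ring
  have hκ1 : 1 < κ := by
    rw [hκ, lt_div_iff₀ hq0]; linarith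
  have hlκ : Real.log κ = -Real.log q := by
    rw [hκ, one_div, Real.log_inv]
  have hlκpos : 0 < Real.log κ := Real.log_pos hκ1
  set H : ℝ → ℝ := fun t => q ^ ((t ^ 2 + t) / 2) * F (q ^ (-t)) with hH
  have hGH : ∀ u, G u = H (Int.fract u) := fun u => hG u
  have hFq : F q⁻¹ = q⁻¹ * F 1 := by
    have h1 : (0:ℝ) < q⁻¹ := inv_pos.mpr hq0
    have := hFeq _ h1
    rw [mul_inv_cancel₀ hqne] at this
    exact this
  have e0 : H 0 = F 1 := by
    show q ^ (((0:ℝ) ^ 2 + 0) / 2) * F (q ^ (-(0:ℝ))) = F 1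
    norm_num
  have e1 : H 1 = q * F q⁻¹ := by
    show q ^ (((1:ℝ) ^ 2 + 1) / 2) * F (q ^ (-(1:ℝ))) = q * F q⁻¹
    norm_num [Real.rpow_neg_one]
  have hH01 : H 0 = H 1 := by
    rw [e0, e1, hFq, ← mul_assoc, mul_inv_cancel₀ hqne, one_mul]
  have hHcont : ContinuousOn H (Set.Icc 0 1) := by
    have c1 : Continuous fun t : ℝ => q ^ ((t ^ 2 + t) / 2) := by
      have h : ∀ t : ℝ, q ^ ((t ^ 2 + t) / 2) =
          Real.exp (Real.log q * ((t ^ 2 + t) / 2)) := by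
        intro t; rw [Real.rpow_def_of_pos hq0]
      simp only [h]
      fun_prop
    have c2 : Continuous fun t : ℝ => q ^ (-t) := by
      have h : ∀ t : ℝ, q ^ (-t) = Real.exp (Real.log q * (-t)) := by
        intro t; rw [Real.rpow_def_of_pos hq0]
      simp only [h]
      fun_prop
    have c3 : ContinuousOn (fun t : ℝ => F (q ^ (-t))) (Set.Icc 0 1) := by
      apply hFcont.comp c2.continuousOn
      intro t _
      exact Real.rpow_pos_of_pos hq0 _
    exact c1.continuousOn.mul c3
  have hGcont : Continuous G := by
    have hc : Continuous (H ∘ Int.fract) := ContinuousOn.comp_fract'' hHcont hH01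
    have heq : G = H ∘ Int.fract := funext fun u => hGH u
    rw [heq]; exact hc
  refine ⟨?_, ?_, hGcont, ?_⟩
  · intro u
    rw [hGH, hGH, Int.fract_add_one]
  · intro u
    rw [hG]
    exact mul_pos (Real.rpow_pos_of_pos hq0 _)
      (hFpos _ (Real.rpow_pos_of_pos hq0 _))
  · intro x hx
    set u := Real.log x / Real.log κ with hu
    have hx0 : (0:ℝ) < x := by linarith
    have hlx : 0 < Real.log x := Real.log_pos hx
    have hupos : 0 < u := div_pos hlx hlκpos
    have hlogx : Real.log x = u * Real.log κ := by
      rw [hu]; field_simp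
    set t := Int.fract u with ht
    have hfloor : (0:ℤ) ≤ ⌊u⌋ := Int.le_floor.mpr (by exact_mod_cast hupos.le)
    obtain ⟨n, hn⟩ : ∃ n : ℕ, (⌊u⌋ : ℝ) = n :=
      ⟨⌊u⌋.toNat, by exact_mod_cast (Int.toNat_of_nonneg hfloor).symm⟩
    have hut : u = t + n := by
      rw [ht, Int.fract, ← hn]; ring
    have hxq : x = q ^ (-u) := by
      rw [Real.rpow_def_of_pos hq0,
        show Real.log q * (-u) = u * (-Real.log q) by ring, ← hlκ, ← hlogx,
        Real.exp_log hx0]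
    have hkey := key n t
    rw [← hut] at hkey
    have hGu : G u = q ^ ((t ^ 2 + t) / 2) * F (q ^ (-t)) := hG u
    have hFx : F x = q ^ (-((u ^ 2 + u) / 2)) * G u := by
      rw [hxq, hkey, hGu, ← mul_assoc, ← Real.rpow_add hq0]
    rw [hFx]
    have hq' : q ^ (-((u ^ 2 + u) / 2)) =
        x ^ ((1:ℝ)/2) * Real.exp (Real.log x ^ 2 / (2 * Real.log κ)) := by
      rw [Real.rpow_def_of_pos hq0, Real.rpow_def_of_pos hx0, ← Real.exp_add]
      congr 1
      have hne : Real.log κ ≠ 0 := ne_of_gt hlκpos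
      rw [hlogx, hlκ]
      have hne' : Real.log q ≠ 0 := neg_ne_zero.mp (hlκ ▸ hne)
      field_simp
      ring
    rw [hq']
end

section
/- Let J_n = ∑_{j=1}^{n} binom(n,j) q^{j(j-1)/2} (the expected number of nonempty independent sets in a G_{n,p} random graph). Then J̄_n := J_n + 1 satisfies the recurrence J̄_n = J̄_{n-1} + ∑_{k=0}^{n-1} binom(n-1,k) q^k p^{n-1-k} J̄_k for all n ≥ 1, with J̄_0 = 1. -/
open Finset

lemma inner_sum_aux (p q : ℝ) (hpq : q + p = 1) (m j : ℕ) (hj : j ≤ m) :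
    ∑ k ∈ range (m + 1), (m.choose k : ℝ) * (k.choose j : ℝ) * q ^ k * p ^ (m - k)
      = (m.choose j : ℝ) * q ^ j := by
  rw [range_eq_Ico, ← Finset.sum_Ico_consecutive _ (Nat.zero_le j) (by omega : j ≤ m + 1)]
  have h1 : ∑ k ∈ Ico 0 j, (m.choose k : ℝ) * (k.choose j : ℝ) * q ^ k * p ^ (m - k) = 0 := by
    apply Finset.sum_eq_zero
    intro k hk
    simp only [mem_Ico] at hk
    rw [Nat.choose_eq_zero_of_lt hk.2]
    simp
  rw [h1, zero_add, Finset.sum_Ico_eq_sum_range]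
  have h2 : ∀ t ∈ range (m + 1 - j),
      (m.choose (j + t) : ℝ) * ((j + t).choose j : ℝ) * q ^ (j + t) * p ^ (m - (j + t))
      = (m.choose j : ℝ) * q ^ j * (q ^ t * p ^ (m - j - t) * ((m - j).choose t : ℝ)) := by
    intro t ht
    simp only [mem_range] at ht
    have h3 : m.choose (j + t) * (j + t).choose j = m.choose j * (m - j).choose t := by
      rw [Nat.choose_mul (by omega), Nat.add_sub_cancel_left]
    have h4 : (m.choose (j + t) : ℝ) * ((j + t).choose j : ℝ)
        = (m.choose j : ℝ) * ((m - j).choose t : ℝ) := by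
      exact_mod_cast congrArg (Nat.cast : ℕ → ℝ) h3
    have h5 : m - (j + t) = m - j - t := by omega
    calc (m.choose (j + t) : ℝ) * ((j + t).choose j : ℝ) * q ^ (j + t) * p ^ (m - (j + t))
        = (m.choose (j + t) : ℝ) * ((j + t).choose j : ℝ) * (q ^ j * q ^ t * p ^ (m - j - t)) := by
          rw [pow_add, h5]; ring
      _ = (m.choose j : ℝ) * q ^ j * (q ^ t * p ^ (m - j - t) * ((m - j).choose t : ℝ)) := by
          rw [h4]; ring
  rw [Finset.sum_congr rfl h2, ← Finset.mul_sum]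
  have h6 : m + 1 - j = (m - j) + 1 := by omega
  rw [h6, ← add_pow q p (m - j), hpq, one_pow, mul_one]

lemma key_aux (p q : ℝ) (hpq : q + p = 1) (m : ℕ) :
    ∑ k ∈ range (m + 1), (m.choose k : ℝ) * q ^ k * p ^ (m - k) *
        (∑ j ∈ range (k + 1), (k.choose j : ℝ) * q ^ (j * (j - 1) / 2))
      = ∑ j ∈ range (m + 1), (m.choose j : ℝ) * q ^ j * q ^ (j * (j - 1) / 2) := by
  have hext : ∀ k ∈ range (m + 1),
      (m.choose k : ℝ) * q ^ k * p ^ (m - k) *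
        (∑ j ∈ range (k + 1), (k.choose j : ℝ) * q ^ (j * (j - 1) / 2))
      = ∑ j ∈ range (m + 1), (m.choose k : ℝ) * q ^ k * p ^ (m - k) *
          ((k.choose j : ℝ) * q ^ (j * (j - 1) / 2)) := by
    intro k hk
    simp only [mem_range] at hk
    rw [Finset.mul_sum]
    refine Finset.sum_subset (Finset.range_subset_range.mpr (by omega)) ?_
    intro x _ hx
    simp only [mem_range, not_lt] at hx
    rw [Nat.choose_eq_zero_of_lt (show k < x by omega)]
    simp
  rw [Finset.sum_congr rfl hext, Finset.sum_comm]
  apply Finset.sum_congr rfl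
  intro j hj
  simp only [mem_range] at hj
  have : ∑ k ∈ range (m + 1),
      (m.choose k : ℝ) * q ^ k * p ^ (m - k) * ((k.choose j : ℝ) * q ^ (j * (j - 1) / 2))
      = (∑ k ∈ range (m + 1), (m.choose k : ℝ) * (k.choose j : ℝ) * q ^ k * p ^ (m - k))
        * q ^ (j * (j - 1) / 2) := by
    rw [Finset.sum_mul]
    apply Finset.sum_congr rfl
    intro k _
    ring
  rw [this, inner_sum_aux p q hpq m j (by omega)]

lemma exp_aux (j : ℕ) : (j + 1) * j / 2 = j + j * (j - 1) / 2 := by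
  have h : (j + 1) * j = 2 * j + j * (j - 1) := by
    cases j with
    | zero => simp
    | succ k => simp only [Nat.add_sub_cancel]; ring_nf
  rw [h, Nat.mul_add_div (by norm_num)]

theorem stmt_10 (p q : ℝ) (hp : 0 < p) (hp1 : p < 1) (hq : q = 1 - p)
    (J Jbar : ℕ → ℝ)
    (hJ : ∀ n : ℕ, J n = ∑ j ∈ Finset.Icc 1 n, (n.choose j : ℝ) * q ^ (j * (j - 1) / 2))
    (hJbar : ∀ n : ℕ, Jbar n = J n + 1) :
    Jbar 0 = 1 ∧ ∀ n : ℕ, 1 ≤ n →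
      Jbar n = Jbar (n - 1) +
        ∑ k ∈ Finset.range n, ((n - 1).choose k : ℝ) * q ^ k * p ^ (n - 1 - k) * Jbar k := by
  have hpq : q + p = 1 := by rw [hq]; ring
  have hJb : ∀ n : ℕ, Jbar n = ∑ j ∈ range (n + 1), (n.choose j : ℝ) * q ^ (j * (j - 1) / 2) := by
    intro n
    have hset : range (n + 1) = insert 0 (Finset.Icc 1 n) := by
      ext x; simp only [mem_range, mem_insert, mem_Icc]; omega
    rw [hJbar, hJ, hset, Finset.sum_insert (by simp)]
    simp only [Nat.choose_zero_right, Nat.cast_one, Nat.zero_sub, pow_zero]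
    ring
  constructor
  · rw [hJbar, hJ]; simp
  · intro n hn
    obtain ⟨m, rfl⟩ : ∃ m, n = m + 1 := ⟨n - 1, by omega⟩
    simp only [Nat.add_sub_cancel]
    have hrhs : ∑ k ∈ range (m + 1), (m.choose k : ℝ) * q ^ k * p ^ (m - k) * Jbar k
        = ∑ j ∈ range (m + 1), (m.choose j : ℝ) * q ^ j * q ^ (j * (j - 1) / 2) := by
      rw [← key_aux p q hpq m]
      apply Finset.sum_congr rfl
      intro k _
      rw [hJb k]
    rw [hrhs, hJb (m + 1), hJb m]
    rw [Finset.sum_range_succ' (fun j => ((m + 1).choose j : ℝ) * q ^ (j * (j - 1) / 2)) (m + 1)]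
    have hpascal : ∀ j ∈ range (m + 1),
        ((m + 1).choose (j + 1) : ℝ) * q ^ ((j + 1) * ((j + 1) - 1) / 2)
        = (m.choose j : ℝ) * q ^ j * q ^ (j * (j - 1) / 2)
          + (m.choose (j + 1) : ℝ) * q ^ ((j + 1) * ((j + 1) - 1) / 2) := by
      intro j _
      rw [Nat.choose_succ_succ']
      push_cast
      try simp only [Nat.add_sub_cancel]
      rw [exp_aux j, pow_add]
      ring
    rw [Finset.sum_congr rfl hpascal, Finset.sum_add_distrib]
    have hshift : ∑ j ∈ range (m + 1), (m.choose (j + 1) : ℝ) * q ^ ((j + 1) * ((j + 1) - 1) / 2)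
          + ((m.choose 0 : ℝ) * q ^ (0 * (0 - 1) / 2))
        = ∑ j ∈ range (m + 1), (m.choose j : ℝ) * q ^ (j * (j - 1) / 2) := by
      rw [← Finset.sum_range_succ' (fun j => (m.choose j : ℝ) * q ^ (j * (j - 1) / 2)) (m + 1),
        Finset.sum_range_succ, Nat.choose_succ_self]
      simp
    simp only [Nat.choose_zero_right, Nat.cast_one, Nat.zero_sub, Nat.zero_mul, pow_zero] at hshift ⊢
    simp only [Nat.zero_div, pow_zero] at hshift ⊢
    linarith [hshift]
end

section
/- (Asymptotic transfer, sum estimate) Let f̃ be a positive increasing function with f̃'(t)/f̃(t) ~ (log_κ t)/t as t → ∞. If b_n ~ n^β (log n)^ξ f̃(n)^α with α > 0 and β, ξ ∈ ℝ, then ∑_{j≤n} b_j ~ (n/(α log_κ n))·b_n as n → ∞. -/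
open Filter Finset

noncomputable def sHf (β ξ α : ℝ) (f : ℝ → ℝ) (t : ℝ) : ℝ :=
  β * Real.log t + ξ * Real.log (Real.log t) + α * Real.log (f t)

noncomputable def sGf (β ξ α : ℝ) (f : ℝ → ℝ) (t : ℝ) : ℝ := Real.exp (sHf β ξ α f t)

noncomputable def sHd (β ξ α : ℝ) (f : ℝ → ℝ) (t : ℝ) : ℝ :=
  β * t⁻¹ + ξ * ((Real.log t)⁻¹ * t⁻¹) + α * (deriv f t / f t)

noncomputable def sFf (κ β ξ α : ℝ) (f : ℝ → ℝ) (t : ℝ) : ℝ :=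
  Real.log κ / α * (t / Real.log t * sGf β ξ α f t)

noncomputable def sc (κ β ξ α : ℝ) (f : ℝ → ℝ) (t : ℝ) : ℝ :=
  Real.log κ / α * ((1 * Real.log t - t * t⁻¹) / (Real.log t) ^ 2
    + t / Real.log t * sHd β ξ α f t)

lemma sGf_pos (β ξ α : ℝ) (f : ℝ → ℝ) (t : ℝ) : 0 < sGf β ξ α f t := Real.exp_pos _

lemma hasDerivAt_sHf (β ξ α : ℝ) (f : ℝ → ℝ) {t : ℝ} (ht : 1 < t)
    (hf : DifferentiableAt ℝ f t) (hf0 : f t ≠ 0) :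
    HasDerivAt (sHf β ξ α f) (sHd β ξ α f t) t := by
  have ht0 : (0:ℝ) < t := lt_trans one_pos ht
  have h1 : HasDerivAt Real.log t⁻¹ t := Real.hasDerivAt_log ht0.ne'
  have h2 : HasDerivAt (fun s => Real.log (Real.log s)) ((Real.log t)⁻¹ * t⁻¹) t :=
    (Real.hasDerivAt_log (Real.log_pos ht).ne').comp t h1
  have h3 : HasDerivAt (fun s => Real.log (f s)) (deriv f t / f t) t :=
    (hf.hasDerivAt).log hf0
  exact ((h1.const_mul β).add (h2.const_mul ξ)).add (h3.const_mul α)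

lemma hasDerivAt_sGf (β ξ α : ℝ) (f : ℝ → ℝ) {t : ℝ} (ht : 1 < t)
    (hf : DifferentiableAt ℝ f t) (hf0 : f t ≠ 0) :
    HasDerivAt (sGf β ξ α f) (sGf β ξ α f t * sHd β ξ α f t) t :=
  (hasDerivAt_sHf β ξ α f ht hf hf0).exp

lemma hasDerivAt_sFf (κ β ξ α : ℝ) (f : ℝ → ℝ) {t : ℝ} (ht : 1 < t)
    (hf : DifferentiableAt ℝ f t) (hf0 : f t ≠ 0) :
    HasDerivAt (sFf κ β ξ α f) (sGf β ξ α f t * sc κ β ξ α f t) t := by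
  have ht0 : (0:ℝ) < t := lt_trans one_pos ht
  have h1 : HasDerivAt Real.log t⁻¹ t := Real.hasDerivAt_log ht0.ne'
  have hq : HasDerivAt (fun s => s / Real.log s)
      ((1 * Real.log t - t * t⁻¹) / (Real.log t) ^ 2) t :=
    (hasDerivAt_id t).div h1 (Real.log_pos ht).ne'
  have hG := hasDerivAt_sGf β ξ α f ht hf hf0
  have := (hq.mul hG).const_mul (Real.log κ / α)
  refine this.congr_deriv ?_
  unfold sc
  ring

lemma sGf_eq (β ξ α : ℝ) (f : ℝ → ℝ) {t : ℝ} (ht : 1 < t) (hf : 0 < f t) :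
    sGf β ξ α f t = t ^ β * Real.log t ^ ξ * f t ^ α := by
  have ht0 : (0:ℝ) < t := lt_trans one_pos ht
  unfold sGf sHf
  rw [Real.rpow_def_of_pos ht0, Real.rpow_def_of_pos (Real.log_pos ht),
    Real.rpow_def_of_pos hf, ← Real.exp_add, ← Real.exp_add]
  congr 1
  ring

lemma tendsto_A (κ : ℝ) (hκ : 1 < κ) (f : ℝ → ℝ)
    (hratio : Tendsto (fun t : ℝ => (deriv f t / f t) /
      (Real.log t / (t * Real.log κ))) atTop (nhds 1)) :
    Tendsto (fun t : ℝ => t * (deriv f t / f t) / Real.log t) atTop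
      (nhds (Real.log κ)⁻¹) := by
  have hL : 0 < Real.log κ := Real.log_pos hκ
  have heq : ∀ t : ℝ, (deriv f t / f t) / (Real.log t / (t * Real.log κ))
      = Real.log κ * (t * (deriv f t / f t) / Real.log t) := fun t => by
    rw [div_div_eq_mul_div]; ring
  have h2 : Tendsto (fun t : ℝ =>
      (Real.log κ)⁻¹ * ((deriv f t / f t) / (Real.log t / (t * Real.log κ))))
      atTop (nhds ((Real.log κ)⁻¹ * 1)) := hratio.const_mul _
  rw [mul_one] at h2
  refine h2.congr fun t => ?_
  rw [heq t, inv_mul_cancel_left₀ hL.ne']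

lemma tendsto_psi (κ : ℝ) (hκ : 1 < κ) (β ξ α : ℝ) (f : ℝ → ℝ)
    (hratio : Tendsto (fun t : ℝ => (deriv f t / f t) /
      (Real.log t / (t * Real.log κ))) atTop (nhds 1)) :
    Tendsto (fun t : ℝ => t / Real.log t * sHd β ξ α f t) atTop
      (nhds (α * (Real.log κ)⁻¹)) := by
  have hu : Tendsto (fun t : ℝ => (Real.log t)⁻¹) atTop (nhds 0) :=
    tendsto_inv_atTop_zero.comp Real.tendsto_log_atTop
  have hA := tendsto_A κ hκ f hratio
  have h := ((hu.const_mul β).add ((hu.mul hu).const_mul ξ)).add (hA.const_mul α)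
  have h' : Tendsto (fun t : ℝ => β * (Real.log t)⁻¹ +
      ξ * ((Real.log t)⁻¹ * (Real.log t)⁻¹) +
      α * (t * (deriv f t / f t) / Real.log t)) atTop (nhds (α * (Real.log κ)⁻¹)) := by
    convert h using 2; ring
  refine h'.congr' ?_
  filter_upwards [eventually_gt_atTop (1:ℝ)] with t ht
  have ht0 : t ≠ 0 := (lt_trans one_pos ht).ne'
  have hlog : Real.log t ≠ 0 := (Real.log_pos ht).ne'
  unfold sHd
  generalize deriv f t / f t = P
  field_simp

lemma tendsto_sc (κ : ℝ) (hκ : 1 < κ) (β ξ α : ℝ) (hα : 0 < α) (f : ℝ → ℝ)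
    (hratio : Tendsto (fun t : ℝ => (deriv f t / f t) /
      (Real.log t / (t * Real.log κ))) atTop (nhds 1)) :
    Tendsto (sc κ β ξ α f) atTop (nhds 1) := by
  have hL : 0 < Real.log κ := Real.log_pos hκ
  have hu : Tendsto (fun t : ℝ => (Real.log t)⁻¹) atTop (nhds 0) :=
    tendsto_inv_atTop_zero.comp Real.tendsto_log_atTop
  have h := ((hu.sub (hu.mul hu)).add (tendsto_psi κ hκ β ξ α f hratio)).const_mul
    (Real.log κ / α)
  have hval : Real.log κ / α * ((0 - 0 * 0) + α * (Real.log κ)⁻¹) = 1 := by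
    field_simp
    ring
  rw [hval] at h
  refine h.congr' ?_
  filter_upwards [eventually_gt_atTop (1:ℝ)] with t ht
  have ht0 : t ≠ 0 := (lt_trans one_pos ht).ne'
  have hlog : Real.log t ≠ 0 := (Real.log_pos ht).ne'
  unfold sc sHd
  generalize deriv f t / f t = P
  congr 1
  field_simp

lemma tendsto_sHd_zero (κ : ℝ) (hκ : 1 < κ) (β ξ α : ℝ) (f : ℝ → ℝ)
    (hratio : Tendsto (fun t : ℝ => (deriv f t / f t) /
      (Real.log t / (t * Real.log κ))) atTop (nhds 1)) :
    Tendsto (sHd β ξ α f) atTop (nhds 0) := by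
  have htop : Tendsto (fun t : ℝ => t / Real.log t) atTop atTop := by
    rw [tendsto_atTop]
    intro C
    set C' : ℝ := max C 1 with hC'
    have hC'pos : 0 < C' := lt_of_lt_of_le one_pos (le_max_right _ _)
    have h := Real.isLittleO_log_id_atTop.def (c := C'⁻¹) (by positivity)
    filter_upwards [h, eventually_gt_atTop (1:ℝ)] with t ht h1
    have hlogpos : 0 < Real.log t := Real.log_pos h1
    have htpos : (0:ℝ) < t := lt_trans one_pos h1
    have hle : Real.log t ≤ C'⁻¹ * t := by
      rwa [Real.norm_eq_abs, Real.norm_eq_abs, abs_of_pos hlogpos, id,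
        abs_of_pos htpos] at ht
    calc C ≤ C' := le_max_left _ _
      _ = t / (C'⁻¹ * t) := by field_simp
      _ ≤ t / Real.log t := by gcongr
  have h := (tendsto_psi κ hκ β ξ α f hratio).div_atTop htop
  refine h.congr' ?_
  filter_upwards [eventually_gt_atTop (1:ℝ)] with t ht
  have hpos : 0 < t / Real.log t := div_pos (lt_trans one_pos ht) (Real.log_pos ht)
  exact mul_div_cancel_left₀ _ hpos.ne'

set_option maxHeartbeats 2000000 in
theorem stmt_14 (κ : ℝ) (hκ : 1 < κ)
    (ftil : ℝ → ℝ) (hpos : ∀ t : ℝ, 0 < t → 0 < ftil t)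
    (hdiff : ∀ t : ℝ, 0 < t → DifferentiableAt ℝ ftil t)
    (hmono : ∃ t0 : ℝ, 0 < t0 ∧ MonotoneOn ftil (Set.Ici t0))
    (hratio : Tendsto (fun t : ℝ => (deriv ftil t / ftil t) /
      (Real.log t / (t * Real.log κ))) atTop (nhds 1))
    (α β ξ : ℝ) (hα : 0 < α)
    (b : ℕ → ℝ)
    (hb : Tendsto (fun n : ℕ =>
      b n / ((n : ℝ) ^ β * (Real.log n) ^ ξ * (ftil n) ^ α)) atTop (nhds 1)) :
    Tendsto (fun n : ℕ => (∑ j ∈ Finset.range (n + 1), b j) /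
      ((n : ℝ) / (α * (Real.log n / Real.log κ)) * b n)) atTop (nhds 1) := by
  have hL : 0 < Real.log κ := Real.log_pos hκ
  set G : ℝ → ℝ := sGf β ξ α ftil with hGdef
  set F : ℝ → ℝ := sFf κ β ξ α ftil with hFdef
  have hGpos : ∀ t : ℝ, 0 < G t := fun t => sGf_pos β ξ α ftil t
  -- derivative facts available for t > 1
  have hder : ∀ t : ℝ, 1 < t → HasDerivAt G (G t * sHd β ξ α ftil t) t := by
    intro t ht
    exact hasDerivAt_sGf β ξ α ftil ht (hdiff t (lt_trans one_pos ht))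
      (hpos t (lt_trans one_pos ht)).ne'
  have hderF : ∀ t : ℝ, 1 < t → HasDerivAt F (G t * sc κ β ξ α ftil t) t := by
    intro t ht
    exact hasDerivAt_sFf κ β ξ α ftil ht (hdiff t (lt_trans one_pos ht))
      (hpos t (lt_trans one_pos ht)).ne'
  have hderH : ∀ t : ℝ, 1 < t → HasDerivAt (sHf β ξ α ftil) (sHd β ξ α ftil t) t := by
    intro t ht
    exact hasDerivAt_sHf β ξ α ftil ht (hdiff t (lt_trans one_pos ht))
      (hpos t (lt_trans one_pos ht)).ne'
  -- eventual positivity of sHd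
  have hψ := tendsto_psi κ hκ β ξ α ftil hratio
  have hHdpos : ∀ᶠ t : ℝ in atTop, 0 < sHd β ξ α ftil t := by
    have h1 : ∀ᶠ t : ℝ in atTop, 0 < t / Real.log t * sHd β ξ α ftil t :=
      hψ.eventually (eventually_gt_nhds (by positivity))
    filter_upwards [h1, eventually_gt_atTop (1:ℝ)] with t h1 ht
    have hq : 0 < t / Real.log t := div_pos (lt_trans one_pos ht) (Real.log_pos ht)
    nlinarith
  obtain ⟨T, hT⟩ := (hHdpos.and (eventually_ge_atTop (2:ℝ))).exists_forall_of_atTop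
  have hT2 : ∀ t : ℝ, T ≤ t → (2:ℝ) ≤ t ∧ 0 < sHd β ξ α ftil t := by
    intro t ht; exact ⟨(hT t ht).2, (hT t ht).1⟩
  -- monotonicity of G on [T, ∞)
  have hmonoG : MonotoneOn G (Set.Ici T) := by
    have hsm : StrictMonoOn G (Set.Ici T) := by
      apply strictMonoOn_of_deriv_pos (convex_Ici T)
      · intro t ht
        have h1 : (1:ℝ) < t := lt_of_lt_of_le one_lt_two (hT2 t ht).1
        exact (hder t h1).differentiableAt.continuousAt.continuousWithinAt
      · intro t ht
        rw [interior_Ici] at ht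
        have hTt : T ≤ t := le_of_lt ht
        have h1 : (1:ℝ) < t := lt_of_lt_of_le one_lt_two (hT2 t hTt).1
        rw [(hder t h1).deriv]
        exact mul_pos (hGpos t) (hT2 t hTt).2
    exact hsm.monotoneOn
  -- divergence of the partial sums of G
  have hT'top : Tendsto (fun n : ℕ => ∑ i ∈ range n, G i) atTop atTop := by
    obtain ⟨N, hN⟩ := exists_nat_ge T
    have hc : 0 < G N := hGpos _
    apply tendsto_atTop_mono' atTop
      (f₁ := fun n : ℕ => ((n - N : ℕ) : ℝ) * G N)
    · filter_upwards [eventually_ge_atTop N] with n hn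
      have h1 : ((n - N : ℕ) : ℝ) * G N = (Finset.Ico N n).card • G N := by
        rw [Nat.card_Ico, nsmul_eq_mul]
      rw [h1]
      calc (Finset.Ico N n).card • G N ≤ ∑ i ∈ Finset.Ico N n, G i := by
            apply Finset.card_nsmul_le_sum
            intro i hi
            have hNi : N ≤ i := (Finset.mem_Ico.1 hi).1
            apply hmonoG (Set.mem_Ici.2 hN)
              (Set.mem_Ici.2 (hN.trans (by exact_mod_cast hNi)))
            exact_mod_cast hNi
        _ ≤ ∑ i ∈ range n, G i := by
            rw [range_eq_Ico]
            apply Finset.sum_le_sum_of_subset_of_nonneg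
              (Finset.Ico_subset_Ico (Nat.zero_le N) le_rfl)
            intro i _ _; exact (hGpos _).le
    · exact (tendsto_natCast_atTop_atTop.comp (tendsto_sub_atTop_nat N)).atTop_mul_const hc
  -- MVT for F on [n, n+1]
  have hslopeF : ∀ n : ℕ, T ≤ (n:ℝ) → ∃ θ ∈ Set.Ioo ((n:ℝ)) ((n:ℝ)+1),
      F ((n:ℝ)+1) - F (n:ℝ) = G θ * sc κ β ξ α ftil θ := by
    intro n hn
    have hab : (n:ℝ) < (n:ℝ)+1 := lt_add_one _
    have h1 : ∀ t ∈ Set.Icc ((n:ℝ)) ((n:ℝ)+1), (1:ℝ) < t := by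
      intro t ht
      have : (2:ℝ) ≤ t := le_trans (hT2 _ le_rfl).1 (hn.trans ht.1)
      linarith
    obtain ⟨θ, hθ, heq⟩ := exists_hasDerivAt_eq_slope F
      (fun t => G t * sc κ β ξ α ftil t) hab
      (fun t ht => ((hderF t (h1 t ht)).differentiableAt.continuousAt).continuousWithinAt)
      (fun t ht => hderF t (h1 t (Set.mem_Icc_of_Ioo ht)))
    refine ⟨θ, hθ, ?_⟩
    rw [heq]
    simp
  have hslopeH : ∀ n : ℕ, T ≤ (n:ℝ) → ∃ θ ∈ Set.Ioo ((n:ℝ)) ((n:ℝ)+1),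
      sHf β ξ α ftil ((n:ℝ)+1) - sHf β ξ α ftil (n:ℝ) = sHd β ξ α ftil θ := by
    intro n hn
    have hab : (n:ℝ) < (n:ℝ)+1 := lt_add_one _
    have h1 : ∀ t ∈ Set.Icc ((n:ℝ)) ((n:ℝ)+1), (1:ℝ) < t := by
      intro t ht
      have : (2:ℝ) ≤ t := le_trans (hT2 _ le_rfl).1 (hn.trans ht.1)
      linarith
    obtain ⟨θ, hθ, heq⟩ := exists_hasDerivAt_eq_slope (sHf β ξ α ftil)
      (sHd β ξ α ftil) hab
      (fun t ht => ((hderH t (h1 t ht)).differentiableAt.continuousAt).continuousWithinAt)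
      (fun t ht => hderH t (h1 t (Set.mem_Icc_of_Ioo ht)))
    refine ⟨θ, hθ, ?_⟩
    rw [heq]
    simp
  -- G(n+1)/G(n) → 1
  have hHdiff : Tendsto (fun n : ℕ => sHf β ξ α ftil ((n:ℝ)+1) - sHf β ξ α ftil (n:ℝ))
      atTop (nhds 0) := by
    rw [Metric.tendsto_atTop]
    intro ε hε
    have h0 := tendsto_sHd_zero κ hκ β ξ α ftil hratio
    have h1 : ∀ᶠ t : ℝ in atTop, |sHd β ξ α ftil t| < ε := by
      have := Metric.tendsto_nhds.1 h0 ε hε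
      simpa [Real.dist_eq] using this
    obtain ⟨T', hT'⟩ := h1.exists_forall_of_atTop
    obtain ⟨M, hM⟩ := exists_nat_ge (max T T')
    refine ⟨M, fun n hn => ?_⟩
    have hTn : T ≤ (n:ℝ) := le_trans (le_max_left _ _) (hM.trans (by exact_mod_cast hn))
    obtain ⟨θ, hθ, heq⟩ := hslopeH n hTn
    rw [Real.dist_eq, sub_zero, heq]
    apply hT'
    have hT'n : T' ≤ (n:ℝ) := le_trans (le_max_right _ _) (hM.trans (by exact_mod_cast hn))
    exact hT'n.trans hθ.1.le
  have hG1 : Tendsto (fun n : ℕ => G ((n:ℝ)+1) / G (n:ℝ)) atTop (nhds 1) := by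
    have h := (Real.continuous_exp.tendsto 0).comp hHdiff
    rw [Real.exp_zero] at h
    refine h.congr fun n => ?_
    simp only [Function.comp_apply, hGdef]
    unfold sGf
    rw [← Real.exp_sub]
  -- key estimate
  have hsc := tendsto_sc κ hκ β ξ α hα ftil hratio
  have hkey : ∀ ε : ℝ, 0 < ε → ∀ᶠ n : ℕ in atTop,
      |G (n:ℝ) - (F ((n:ℝ)+1) - F (n:ℝ))| ≤ ε * G (n:ℝ) := by
    intro ε hε
    set δ := min (ε/3) 1 with hδdef
    have hδpos : 0 < δ := lt_min (by linarith) one_pos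
    have hδ1 : δ ≤ 1 := min_le_right _ _
    have hδε : 3*δ ≤ ε := by
      have := min_le_left (ε/3) 1
      have : δ ≤ ε/3 := this
      linarith
    have hscev : ∀ᶠ t : ℝ in atTop, |sc κ β ξ α ftil t - 1| ≤ δ := by
      have := Metric.tendsto_nhds.1 hsc δ hδpos
      filter_upwards [this] with t h
      rw [Real.dist_eq] at h
      exact h.le
    obtain ⟨T2, hT2'⟩ := hscev.exists_forall_of_atTop
    have hGev : ∀ᶠ n : ℕ in atTop, G ((n:ℝ)+1) / G (n:ℝ) ≤ 1 + δ :=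
      hG1.eventually (eventually_le_nhds (by linarith))
    obtain ⟨M1, hM1⟩ := exists_nat_ge (max T T2)
    filter_upwards [hGev, eventually_ge_atTop M1] with n h0 h1
    have hn1 : (M1:ℝ) ≤ (n:ℝ) := by exact_mod_cast h1
    have hTn : T ≤ (n:ℝ) := le_trans (le_max_left _ _) (hM1.trans hn1)
    have hT2n : T2 ≤ (n:ℝ) := le_trans (le_max_right _ _) (hM1.trans hn1)
    obtain ⟨θ, hθ, heq⟩ := hslopeF n hTn
    have hscθ := abs_le.1 (hT2' θ (hT2n.trans hθ.1.le))
    have hGn : 0 < G (n:ℝ) := hGpos _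
    have hGθ : 0 < G θ := hGpos _
    have hmono1 : G (n:ℝ) ≤ G θ :=
      hmonoG (Set.mem_Ici.2 hTn) (Set.mem_Ici.2 (hTn.trans hθ.1.le)) hθ.1.le
    have hmono2 : G θ ≤ G ((n:ℝ)+1) :=
      hmonoG (Set.mem_Ici.2 (hTn.trans hθ.1.le))
        (Set.mem_Ici.2 (hTn.trans (by linarith [hθ.1.le]))) hθ.2.le
    have hup : G ((n:ℝ)+1) ≤ (1+δ) * G (n:ℝ) := by
      rw [div_le_iff₀ hGn] at h0
      linarith
    rw [heq, abs_le]
    constructor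
    · nlinarith [hscθ.1, hscθ.2, mul_pos hGn hδpos, sq_nonneg δ]
    · nlinarith [hscθ.1, hscθ.2, mul_pos hGn hδpos, sq_nonneg δ]
  have hlit : (fun n : ℕ => G (n:ℝ) - (F ((n:ℝ)+1) - F (n:ℝ))) =o[atTop]
      (fun n : ℕ => G (n:ℝ)) := by
    rw [Asymptotics.isLittleO_iff]
    intro c hc
    filter_upwards [hkey c hc] with n h
    simpa [Real.norm_eq_abs, abs_of_pos (hGpos ((n:ℝ)))] using h
  have hsumFo := hlit.sum_range (fun i => (hGpos _).le) hT'top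
  have htel : ∀ n : ℕ, ∑ i ∈ range n, (F ((i:ℝ)+1) - F (i:ℝ)) = F (n:ℝ) - F ((0:ℕ):ℝ) := by
    intro n
    rw [← Finset.sum_range_sub (fun i : ℕ => F (i:ℝ)) n]
    exact Finset.sum_congr rfl fun i _ => by push_cast; ring_nf
  have hnormT' : Tendsto (fun n : ℕ => ‖∑ i ∈ range n, G (i:ℝ)‖) atTop atTop :=
    hT'top.congr fun n => (Real.norm_of_nonneg
      (Finset.sum_nonneg fun i _ => (hGpos _).le)).symm
  have hconsto : (fun _ : ℕ => F ((0:ℕ):ℝ)) =o[atTop] (fun n : ℕ => ∑ i ∈ range n, G (i:ℝ)) :=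
    Asymptotics.isLittleO_const_left.2 (Or.inr hnormT')
  have hFo : (fun n : ℕ => (∑ i ∈ range n, G (i:ℝ)) - F (n:ℝ)) =o[atTop]
      (fun n : ℕ => ∑ i ∈ range n, G (i:ℝ)) := by
    have h1 := hsumFo.sub hconsto
    refine h1.congr_left fun n => ?_
    rw [Finset.sum_sub_distrib, htel n]
    ring
  have hT'pos : ∀ᶠ n : ℕ in atTop, 0 < ∑ i ∈ range n, G (i:ℝ) :=
    hT'top.eventually_gt_atTop 0
  have hFr : Tendsto (fun n : ℕ => F (n:ℝ) / ∑ i ∈ range n, G (i:ℝ)) atTop (nhds 1) := by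
    have h0 := hFo.tendsto_div_nhds_zero
    have h1 : Tendsto (fun n : ℕ =>
        1 - ((∑ i ∈ range n, G (i:ℝ)) - F (n:ℝ)) / ∑ i ∈ range n, G (i:ℝ))
        atTop (nhds (1 - 0)) := tendsto_const_nhds.sub h0
    rw [sub_zero] at h1
    refine h1.congr' ?_
    filter_upwards [hT'pos] with n hn
    field_simp
    ring
  -- sums of b
  have hb0 : Tendsto (fun n : ℕ => b n / G (n:ℝ)) atTop (nhds 1) := by
    refine hb.congr' ?_
    filter_upwards [eventually_ge_atTop 2] with n hn
    have h1 : (1:ℝ) < (n:ℝ) := by exact_mod_cast Nat.lt_of_lt_of_le one_lt_two hn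
    rw [hGdef, sGf_eq β ξ α ftil h1 (hpos _ (lt_trans one_pos h1))]
  have hbo : (fun n : ℕ => b n - G (n:ℝ)) =o[atTop] (fun n : ℕ => G (n:ℝ)) := by
    rw [Asymptotics.isLittleO_iff_tendsto (fun n h => absurd h (hGpos _).ne')]
    have h1 : Tendsto (fun n : ℕ => b n / G (n:ℝ) - 1) atTop (nhds (1 - 1)) :=
      hb0.sub tendsto_const_nhds
    rw [sub_self] at h1
    refine h1.congr fun n => ?_
    rw [sub_div, div_self (hGpos ((n:ℝ))).ne']
  have hsumbo := hbo.sum_range (fun i => (hGpos _).le) hT'top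
  have hSr : Tendsto (fun n : ℕ => (∑ i ∈ range n, b i) / ∑ i ∈ range n, G (i:ℝ))
      atTop (nhds 1) := by
    have h0 : (fun n : ℕ => (∑ i ∈ range n, b i) - ∑ i ∈ range n, G (i:ℝ)) =o[atTop]
        (fun n : ℕ => ∑ i ∈ range n, G (i:ℝ)) :=
      hsumbo.congr_left fun n => by rw [Finset.sum_sub_distrib]
    have h1 : Tendsto (fun n : ℕ =>
        ((∑ i ∈ range n, b i) - ∑ i ∈ range n, G (i:ℝ)) / ∑ i ∈ range n, G (i:ℝ) + 1)
        atTop (nhds (0 + 1)) := h0.tendsto_div_nhds_zero.add tendsto_const_nhds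
    rw [zero_add] at h1
    refine h1.congr' ?_
    filter_upwards [hT'pos] with n hn
    field_simp
    ring
  have hSF : Tendsto (fun n : ℕ => (∑ i ∈ range n, b i) / F (n:ℝ)) atTop (nhds 1) := by
    have h1 := hSr.div hFr one_ne_zero
    rw [div_one] at h1
    refine h1.congr' ?_
    filter_upwards [hT'pos] with n hn
    simp only [Pi.div_apply]
    rw [div_div_div_comm, div_self hn.ne', div_one]
  -- ratio lemmas for F(n+1)/F(n)
  have hinv : Tendsto (fun n : ℕ => (Real.log (n:ℝ))⁻¹) atTop (nhds 0) :=
    tendsto_inv_atTop_zero.comp (Real.tendsto_log_atTop.comp tendsto_natCast_atTop_atTop)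
  have hlogr : Tendsto (fun n : ℕ => Real.log (n:ℝ) / Real.log ((n:ℝ)+1)) atTop (nhds 1) := by
    have hlow : Tendsto (fun n : ℕ => (1 + Real.log 2 * (Real.log (n:ℝ))⁻¹)⁻¹)
        atTop (nhds 1) := by
      have h := (tendsto_const_nhds.add (hinv.const_mul (Real.log 2))).inv₀
        (by norm_num : (1:ℝ) + Real.log 2 * 0 ≠ 0)
      simpa using h
    apply tendsto_of_tendsto_of_tendsto_of_le_of_le' hlow tendsto_const_nhds
    · filter_upwards [eventually_ge_atTop 2] with n hn
      have h1 : (1:ℝ) < (n:ℝ) := by exact_mod_cast Nat.lt_of_lt_of_le one_lt_two hn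
      have hlogn : 0 < Real.log (n:ℝ) := Real.log_pos h1
      have hlogn1 : 0 < Real.log ((n:ℝ)+1) := Real.log_pos (by linarith)
      have hsum : 0 < Real.log (n:ℝ) + Real.log 2 :=
        add_pos hlogn (Real.log_pos one_lt_two)
      have e1 : (1 + Real.log 2 * (Real.log (n:ℝ))⁻¹)⁻¹
          = Real.log (n:ℝ) / (Real.log (n:ℝ) + Real.log 2) := by
        rw [eq_div_iff hsum.ne']
        field_simp
      have e2 : Real.log ((n:ℝ)+1) ≤ Real.log (n:ℝ) + Real.log 2 := by
        rw [← Real.log_mul (by positivity) two_ne_zero]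
        exact Real.log_le_log (by positivity) (by linarith)
      rw [e1]
      gcongr
    · filter_upwards [eventually_ge_atTop 2] with n hn
      have h1 : (1:ℝ) < (n:ℝ) := by exact_mod_cast Nat.lt_of_lt_of_le one_lt_two hn
      have hlogn1 : 0 < Real.log ((n:ℝ)+1) := Real.log_pos (by linarith)
      rw [div_le_one hlogn1]
      exact Real.log_le_log (by linarith) (by linarith)
  have hnr : Tendsto (fun n : ℕ => ((n:ℝ)+1)/(n:ℝ)) atTop (nhds 1) := by
    have h := (tendsto_const_nhds :
        Tendsto (fun _ : ℕ => (1:ℝ)) atTop (nhds 1)).add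
      tendsto_one_div_atTop_nhds_zero_nat
    rw [add_zero] at h
    refine h.congr' ?_
    filter_upwards [eventually_ge_atTop 1] with n hn
    have h0 : (n:ℝ) ≠ 0 := by
      have : (1:ℝ) ≤ (n:ℝ) := by exact_mod_cast hn
      linarith
    field_simp
  have hFF1 : Tendsto (fun n : ℕ => F ((n:ℝ)+1) / F (n:ℝ)) atTop (nhds 1) := by
    have h := (hnr.mul hlogr).mul hG1
    rw [show ((1:ℝ)*1)*1 = 1 by norm_num] at h
    refine h.congr' ?_
    filter_upwards [eventually_ge_atTop 2] with n hn
    have h1 : (1:ℝ) < (n:ℝ) := by exact_mod_cast Nat.lt_of_lt_of_le one_lt_two hn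
    have h0 : (n:ℝ) ≠ 0 := by linarith
    have hlogn : Real.log (n:ℝ) ≠ 0 := (Real.log_pos h1).ne'
    have hlogn1 : Real.log ((n:ℝ)+1) ≠ 0 := (Real.log_pos (by linarith)).ne'
    have e : ∀ t : ℝ, F t = Real.log κ / α * (t / Real.log t * G t) := fun _ => rfl
    rw [e, e]
    have hg0 : G (n:ℝ) ≠ 0 := (hGpos _).ne'
    have hg1 : G ((n:ℝ)+1) ≠ 0 := (hGpos _).ne'
    generalize G ((n:ℝ)+1) = g1 at hg1 ⊢
    generalize G (n:ℝ) = g0 at hg0 ⊢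
    clear_value G F
    field_simp [hα.ne', hL.ne']
  have hSF1 : Tendsto (fun n : ℕ => (∑ i ∈ range (n+1), b i) / F ((n:ℝ)+1))
      atTop (nhds 1) := by
    have h := hSF.comp (tendsto_add_atTop_nat 1)
    refine h.congr fun n => ?_
    simp [Function.comp, Nat.cast_add_one]
  have hbinv : Tendsto (fun n : ℕ => G (n:ℝ) / b n) atTop (nhds 1) := by
    have h := hb0.inv₀ one_ne_zero
    rw [inv_one] at h
    refine h.congr fun n => ?_
    rw [inv_div]
  have hbne : ∀ᶠ n : ℕ in atTop, 0 < b n := by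
    have h := hb0.eventually (eventually_gt_nhds (by norm_num : (0:ℝ) < 1))
    filter_upwards [h] with n hn
    by_contra hb'
    push_neg at hb'
    have : b n / G (n:ℝ) ≤ 0 := div_nonpos_iff.2 (Or.inr ⟨hb', (hGpos _).le⟩)
    linarith
  have hFpos : ∀ t : ℝ, 2 ≤ t → 0 < F t := by
    intro t ht
    rw [hFdef]
    unfold sFf
    exact mul_pos (div_pos hL hα)
      (mul_pos (div_pos (by linarith) (Real.log_pos (by linarith))) (hGpos t))
  -- final assembly
  have h := (hSF1.mul hFF1).mul hbinv
  rw [show ((1:ℝ)*1)*1 = 1 by norm_num] at h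
  refine h.congr' ?_
  filter_upwards [eventually_ge_atTop 2, hbne] with n hn hbn
  have h1 : (1:ℝ) < (n:ℝ) := by exact_mod_cast Nat.lt_of_lt_of_le one_lt_two hn
  have h2 : (2:ℝ) ≤ (n:ℝ) := by exact_mod_cast hn
  have hlogn : 0 < Real.log (n:ℝ) := Real.log_pos h1
  have hF0 : 0 < F (n:ℝ) := hFpos _ h2
  have hF1p : 0 < F ((n:ℝ)+1) := hFpos _ (by linarith)
  have hk : 0 < (n:ℝ) / (α * (Real.log (n:ℝ) / Real.log κ)) :=
    div_pos (by linarith) (mul_pos hα (div_pos hlogn hL))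
  have hg0 : G (n:ℝ) ≠ 0 := (hGpos _).ne'
  have hFk : F (n:ℝ) = ((n:ℝ) / (α * (Real.log (n:ℝ) / Real.log κ))) * G (n:ℝ) := by
    have e : F (n:ℝ) = Real.log κ / α * ((n:ℝ) / Real.log (n:ℝ) * G (n:ℝ)) := rfl
    rw [e]
    generalize G (n:ℝ) = g0
    clear_value G F
    field_simp [hα.ne', hL.ne']
  rw [hFk]
  generalize hg : G (n:ℝ) = g0 at hg0 ⊢
  have hF1 : F ((n:ℝ)+1) ≠ 0 := hF1p.ne'
  generalize F ((n:ℝ)+1) = f1 at hF1 ⊢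
  clear_value G F
  field_simp [hα.ne', hL.ne', hbn.ne']
end

section
/- Define ζ_0 = ζ_1 = 1 and ζ_m = (1/(m - 1/m)) ∑_{j=1}^{m-1} binom(m,j) (ζ_j/j) ζ_{m-j} for m ≥ 2. Then there exist constants c, K > 0 such that ζ_m ≤ c·m!·K^m for all m ≥ 1 (so the sequence (ζ_m) is a moment sequence determining a unique distribution). -/
open Finset

theorem stmt_18 (ζ : ℕ → ℝ) (hζ0 : ζ 0 = 1) (hζ1 : ζ 1 = 1)
    (hrec : ∀ m : ℕ, 2 ≤ m →
      ζ m = ((m : ℝ) - 1 / (m : ℝ))⁻¹ *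
        ∑ j ∈ Finset.Ico 1 m, (m.choose j : ℝ) * (ζ j / (j : ℝ)) * ζ (m - j)) :
    ∃ c K : ℝ, 0 < c ∧ 0 < K ∧
      ∀ m : ℕ, 1 ≤ m → ζ m ≤ c * (m.factorial : ℝ) * K ^ m := by
  have key : ∀ m : ℕ, 1 ≤ m → 0 ≤ ζ m ∧ ζ m ≤ (1/2) * m.factorial * 2 ^ m := by
    intro m
    induction m using Nat.strong_induction_on with
    | _ m ih =>
      intro hm
      rcases eq_or_lt_of_le hm with h1 | h2
      · subst h1
        rw [hζ1]
        norm_num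
      · have hm2 : 2 ≤ m := h2
        have hx2 : (2:ℝ) ≤ (m:ℝ) := by exact_mod_cast hm2
        have hxpos : (0:ℝ) < (m:ℝ) := by linarith
        have hdpos : (0:ℝ) < (m:ℝ) - 1 / (m:ℝ) := by
          have : 1 / (m:ℝ) ≤ 1 / 2 := by
            apply one_div_le_one_div_of_le <;> linarith
          linarith
        have hApos : (0:ℝ) < ((m:ℝ) - 1 / (m:ℝ))⁻¹ := inv_pos.mpr hdpos
        -- per-term bounds
        have hterm : ∀ j ∈ Finset.Ico 1 m,
            0 ≤ (m.choose j : ℝ) * (ζ j / (j : ℝ)) * ζ (m - j) ∧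
            (m.choose j : ℝ) * (ζ j / (j : ℝ)) * ζ (m - j) ≤ (m.factorial : ℝ) * 2 ^ m / 4 := by
          intro j hj
          rw [Finset.mem_Ico] at hj
          obtain ⟨hj1, hjm⟩ := hj
          obtain ⟨hjnn, hjb⟩ := ih j hjm hj1
          obtain ⟨hknn, hkb⟩ := ih (m - j) (by omega) (by omega)
          have hjpos : (0:ℝ) < (j:ℝ) := by exact_mod_cast hj1
          constructor
          · exact mul_nonneg (mul_nonneg (by positivity) (div_nonneg hjnn hjpos.le)) hknn
          · have hstep : (m.choose j : ℝ) * (ζ j / (j : ℝ)) * ζ (m - j) ≤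
                (m.choose j : ℝ) * (((1/2) * j.factorial * 2 ^ j) / (j : ℝ)) *
                  ((1/2) * (m - j).factorial * 2 ^ (m - j)) := by
              gcongr
            have hc : (m.choose j : ℝ) * (j.factorial : ℝ) * ((m - j).factorial : ℝ)
                = (m.factorial : ℝ) := by
              exact_mod_cast congrArg (Nat.cast (R := ℝ))
                (Nat.choose_mul_factorial_mul_factorial hjm.le)
            have hpow : (2:ℝ) ^ j * 2 ^ (m - j) = 2 ^ m := by
              rw [← pow_add]
              congr 1
              omega
            have heq : (m.choose j : ℝ) * (((1/2) * j.factorial * 2 ^ j) / (j : ℝ)) *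
                  ((1/2) * (m - j).factorial * 2 ^ (m - j))
                = ((m.choose j : ℝ) * (j.factorial:ℝ) * ((m - j).factorial:ℝ)) *
                    ((2:ℝ) ^ j * 2 ^ (m - j)) / (4 * (j:ℝ)) := by
              field_simp
              ring
            rw [hc, hpow] at heq
            rw [heq] at hstep
            refine hstep.trans ?_
            gcongr
            have hj1r : (1:ℝ) ≤ (j:ℝ) := by exact_mod_cast hj1
            linarith
        -- sum bound
        set S := ∑ j ∈ Finset.Ico 1 m, (m.choose j : ℝ) * (ζ j / (j : ℝ)) * ζ (m - j) with hS
        have hSnn : 0 ≤ S := Finset.sum_nonneg fun j hj => (hterm j hj).1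
        have hSle : S ≤ ((m:ℝ) - 1) * ((m.factorial : ℝ) * 2 ^ m / 4) := by
          have := Finset.sum_le_card_nsmul (Finset.Ico 1 m)
            (fun j => (m.choose j : ℝ) * (ζ j / (j : ℝ)) * ζ (m - j))
            ((m.factorial : ℝ) * 2 ^ m / 4) (fun j hj => (hterm j hj).2)
          rw [Nat.card_Ico] at this
          calc S ≤ (m - 1) • ((m.factorial : ℝ) * 2 ^ m / 4) := this
            _ = ((m - 1 : ℕ) : ℝ) * ((m.factorial : ℝ) * 2 ^ m / 4) := by
                rw [nsmul_eq_mul]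
            _ = ((m:ℝ) - 1) * ((m.factorial : ℝ) * 2 ^ m / 4) := by
                congr 1
                push_cast [Nat.cast_sub hm]
                ring
        rw [hrec m hm2, ← hS]
        constructor
        · exact mul_nonneg hApos.le hSnn
        · have h1 : ((m:ℝ) - 1 / (m:ℝ))⁻¹ * S ≤
              ((m:ℝ) - 1 / (m:ℝ))⁻¹ * (((m:ℝ) - 1) * ((m.factorial : ℝ) * 2 ^ m / 4)) := by
            gcongr
          refine h1.trans ?_
          rw [inv_mul_le_iff₀ hdpos]
          have hfpos : (0:ℝ) < (m.factorial : ℝ) := by positivity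
          have hppos : (0:ℝ) < (2:ℝ) ^ m := by positivity
          have h1m : 1 / (m:ℝ) ≤ 1 := by
            rw [div_le_one hxpos]; linarith
          have hkey : ((m:ℝ) - 1) ≤ 2 * ((m:ℝ) - 1 / (m:ℝ)) := by linarith
          nlinarith [mul_pos hfpos hppos]
  refine ⟨1/2, 2, by norm_num, by norm_num, fun m hm => ?_⟩
  exact (key m hm).2
end

section
/- If ζ(y) = ∑_{m≥1} ζ_m y^m/(m·m!) where ζ_1 = 1 and ζ_m = (1/(m - 1/m)) ∑_{j=1}^{m-1} binom(m,j)(ζ_j/j)ζ_{m-j} for m ≥ 2, then ζ satisfies the nonlinear ODE y²ζ'' + yζ' - ζ = y·ζ·ζ' (as formal power series), with ζ(0) = 0 and ζ'(0) = 1. -/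
open Finset PowerSeries

theorem stmt_19 (ζ : ℕ → ℝ) (hζ1 : ζ 1 = 1)
    (hrec : ∀ m : ℕ, 2 ≤ m →
      ζ m = ((m : ℝ) - 1 / (m : ℝ))⁻¹ *
        ∑ j ∈ Finset.Ico 1 m, (m.choose j : ℝ) * (ζ j / (j : ℝ)) * ζ (m - j))
    (Z : PowerSeries ℝ)
    (hZ : ∀ m : ℕ, PowerSeries.coeff m Z =
      if m = 0 then 0 else ζ m / ((m : ℝ) * (m.factorial : ℝ))) :
    PowerSeries.X ^ 2 * Z.derivativeFun.derivativeFun +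
        PowerSeries.X * Z.derivativeFun - Z =
      PowerSeries.X * Z * Z.derivativeFun ∧
    PowerSeries.constantCoeff Z = 0 ∧
    PowerSeries.coeff 1 Z = 1 := by
  have h0 : PowerSeries.constantCoeff Z = 0 := by
    have := hZ 0; simpa using this
  have h1 : PowerSeries.coeff 1 Z = 1 := by
    rw [hZ 1]; simp [hζ1]
  refine ⟨?_, h0, h1⟩
  ext n
  rw [map_sub, map_add, mul_assoc, coeff_X_pow_mul']
  match n with
  | 0 =>
    simp [coeff_zero_X_mul, ← coeff_zero_eq_constantCoeff, hZ 0]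
  | 1 =>
    rw [if_neg (by norm_num), show (1:ℕ) = 0 + 1 from rfl, coeff_succ_X_mul, coeff_succ_X_mul,
      (show ∀ (f : PowerSeries ℝ) (n : ℕ), coeff n f.derivativeFun = coeff (n + 1) f * (n + 1) from fun f n => coeff_derivative f n)]
    simp [PowerSeries.coeff_zero_eq_constantCoeff, map_mul, h0, h1]
  | (k + 2) =>
    rw [coeff_succ_X_mul, coeff_succ_X_mul, if_pos (by omega)]
    have hd : k + 2 - 2 = k := rfl
    rw [hd, (show ∀ (f : PowerSeries ℝ) (n : ℕ), coeff n f.derivativeFun = coeff (n + 1) f * (n + 1) from fun f n => coeff_derivative f n), (show ∀ (f : PowerSeries ℝ) (n : ℕ), coeff n f.derivativeFun = coeff (n + 1) f * (n + 1) from fun f n => coeff_derivative f n), coeff_mul,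
      Finset.Nat.sum_antidiagonal_eq_sum_range_succ_mk]
    simp only [(show ∀ (f : PowerSeries ℝ) (n : ℕ), coeff n f.derivativeFun = coeff (n + 1) f * (n + 1) from fun f n => coeff_derivative f n)]
    set m : ℕ := k + 2 with hm
    have hm2 : 2 ≤ m := by omega
    have hmf : (m.factorial : ℝ) ≠ 0 := by exact_mod_cast m.factorial_ne_zero
    -- rewrite the RHS sum
    have hsum : ∑ i ∈ Finset.range (k + 1 + 1),
        (PowerSeries.coeff i Z) *
          ((PowerSeries.coeff (k + 1 - i + 1) Z) * (((k + 1 - i : ℕ) : ℝ) + 1))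
        = (∑ j ∈ Finset.Ico 1 m, (m.choose j : ℝ) * (ζ j / (j : ℝ)) * ζ (m - j))
            / (m.factorial : ℝ) := by
      rw [Finset.sum_div, Finset.range_eq_Ico, Finset.sum_eq_sum_Ico_succ_bot (by omega)]
      rw [hZ 0, if_pos rfl, zero_mul, zero_add]
      have hIco : Finset.Ico (0+1) (k+1+1) = Finset.Ico 1 m := rfl
      rw [hIco]
      apply Finset.sum_congr rfl
      intro j hj
      rw [Finset.mem_Ico] at hj
      obtain ⟨hj1, hj2⟩ := hj
      have hje : k + 1 - j + 1 = m - j := by omega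
      have hje2 : ((k + 1 - j : ℕ) : ℝ) + 1 = ((m - j : ℕ) : ℝ) := by
        exact_mod_cast congrArg (Nat.cast (R := ℝ)) hje
      rw [hje, hje2, hZ j, hZ (m - j), if_neg (by omega), if_neg (by omega)]
      have hjm : j ≤ m := by omega
      have hcf : (m.choose j : ℝ) * (j.factorial : ℝ) * ((m - j).factorial : ℝ)
          = (m.factorial : ℝ) := by
        exact_mod_cast Nat.choose_mul_factorial_mul_factorial hjm
      have hj0 : (j:ℝ) ≠ 0 := by
        have : 0 < j := hj1
        exact_mod_cast this.ne'
      have hjf : (j.factorial : ℝ) ≠ 0 := by exact_mod_cast j.factorial_ne_zero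
      have hmj0 : ((m - j : ℕ):ℝ) ≠ 0 := by
        have : 0 < m - j := by omega
        exact_mod_cast this.ne'
      have hmjf : ((m - j).factorial : ℝ) ≠ 0 := by exact_mod_cast (m-j).factorial_ne_zero
      set A : ℝ := ((m - j : ℕ) : ℝ) with hA
      have hA0 : A ≠ 0 := hmj0
      have hstep : ζ (m - j) / (A * ((m - j).factorial : ℝ)) * A
          = ζ (m - j) / ((m - j).factorial : ℝ) := by
        field_simp
      rw [hstep]
      field_simp
      linear_combination (-(ζ j * ζ (m - j))) * hcf
    rw [hsum]
    have hcoef : PowerSeries.coeff m Z = ζ m / ((m:ℝ) * (m.factorial : ℝ)) := by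
      rw [hZ m, if_neg (by omega)]
    rw [hcoef, hrec m hm2]
    generalize (∑ j ∈ Finset.Ico 1 m, (m.choose j : ℝ) * (ζ j / (j : ℝ)) * ζ (m - j)) = S
    have hmc : (m:ℝ) = (k:ℝ) + 2 := by rw [hm]; push_cast; ring
    rw [hmc]
    generalize hFe : (m.factorial : ℝ) = F at hmf ⊢
    have hk0 : (k:ℝ) + 2 ≠ 0 := by positivity
    have hk3 : ((k:ℝ)+2) * ((k:ℝ)+2) - 1 ≠ 0 := by nlinarith [(by positivity : (0:ℝ) ≤ (k:ℝ))]
    have hk4 : ((k:ℝ)+2)^2 - 1 ≠ 0 := by nlinarith [(by positivity : (0:ℝ) ≤ (k:ℝ))]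
    have hk1 : ((k:ℝ) + 2) - 1/((k:ℝ)+2) ≠ 0 := by
      intro h
      apply hk3
      have := sub_eq_zero.mp h
      field_simp at this
      nlinarith [this]
    push_cast
    field_simp
    ring
end
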